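/- arXiv:1704.05992 — 9 statements merged into one kernel-verified Lean document; each statement's English description precedes it below -/
import Mathlib

section
/- Let F be a field extension of F_q and let f_1, ..., f_s be elements of F. Then f_1, ..., f_s are linearly independent over F_q if and only if the Moore determinant det(M) is nonzero, where M is the s×s matrix with entry M_{i,j} = f_j^{q^{i-1}}. -/
/-- Let `F` be a field extension of the finite field `F_q` and
`f_1, …, f_s ∈ F`.  Then `f_1, …, f_s` are linearly independent over `F_q` iff the
Moore determinant `det (f_j ^ (q^(i-1)))` is nonzero. -/
theorem moore_det_ne_zero_iff_linearIndependent
    (Fq F : Type*) [Field Fq] [Fintype Fq] [Field F] [Algebra Fq F]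
    (s : ℕ) (f : Fin s → F) :
    LinearIndependent Fq f ↔
      Matrix.det (Matrix.of fun i j : Fin s => f j ^ (Fintype.card Fq) ^ (i : ℕ)) ≠ 0 := by
  classical
  set q := Fintype.card Fq with hq
  obtain ⟨p, hp⟩ := CharP.exists Fq
  haveI := hp
  obtain ⟨n, hpp, hcard⟩ := FiniteField.card Fq p
  haveI : Fact p.Prime := ⟨hpp⟩
  haveI : CharP F p := charP_of_injective_algebraMap (algebraMap Fq F).injective p
  haveI : ExpChar F p := ExpChar.prime hpp
  -- the `i`-th power Frobenius on `F`: `x ↦ x ^ q ^ i` is a ring hom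
  have hfrob : ∀ (i : ℕ) (x : F), iterateFrobenius F p (n * i) x = x ^ q ^ i := by
    intro i x
    rw [iterateFrobenius_def, pow_mul, ← hcard]
  -- algebra map elements are fixed by `x ↦ x ^ q ^ i`
  have halg : ∀ (i : ℕ) (c : Fq), (algebraMap Fq F c) ^ q ^ i = algebraMap Fq F c := by
    intro i c
    rw [← map_pow, FiniteField.pow_card_pow]
  constructor
  · -- hard direction: linear independence ⇒ nonzero determinant
    intro hli hdet
    obtain ⟨a, ha, ha0⟩ := Matrix.exists_vecMul_eq_zero_iff.2 hdet
    -- for each `j`, `∑ i, a i * f j ^ q ^ i = 0`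
    have hrel : ∀ j, ∑ i, a i * f j ^ q ^ (i : ℕ) = 0 := by
      intro j
      have := congrFun ha0 j
      simpa [Matrix.vecMul, dotProduct] using this
    -- the nonzero q-polynomial
    set P : Polynomial F := ∑ i : Fin s, Polynomial.C (a i) * Polynomial.X ^ (q ^ (i : ℕ))
      with hP
    obtain ⟨i0, hi0⟩ := Function.ne_iff.1 ha
    have hq1 : 1 < q := Fintype.one_lt_card
    have hPne : P ≠ 0 := by
      intro h0
      have hcoeff : P.coeff (q ^ (i0 : ℕ)) = a i0 := by
        rw [hP, Polynomial.finset_sum_coeff]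
        rw [Finset.sum_eq_single i0]
        · simp
        · intro b _ hb
          have hne : q ^ (i0 : ℕ) ≠ q ^ (b : ℕ) := fun h =>
            hb (Fin.ext (Nat.pow_right_injective hq1 h.symm))
          simp [Polynomial.coeff_C_mul, Polynomial.coeff_X_pow, hne]
        · simp
      rw [h0] at hcoeff
      exact hi0 (by simpa using hcoeff.symm)
    -- every `Fq`-linear combination of the `f j` is a root of `P`
    have heval : ∀ c : Fin s → Fq,
        P.eval (∑ j, algebraMap Fq F (c j) * f j) = 0 := by
      intro c
      have hpow : ∀ i : Fin s,
          (∑ j, algebraMap Fq F (c j) * f j) ^ q ^ (i : ℕ)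
            = ∑ j, algebraMap Fq F (c j) * f j ^ q ^ (i : ℕ) := by
        intro i
        rw [← hfrob (i : ℕ), map_sum]
        refine Finset.sum_congr rfl fun j _ => ?_
        rw [hfrob, mul_pow, halg]
      rw [hP, Polynomial.eval_finset_sum]
      simp only [Polynomial.eval_mul, Polynomial.eval_C, Polynomial.eval_pow,
        Polynomial.eval_X]
      calc ∑ i : Fin s, a i * (∑ j, algebraMap Fq F (c j) * f j) ^ q ^ (i : ℕ)
          = ∑ i : Fin s, ∑ j, algebraMap Fq F (c j) * (a i * f j ^ q ^ (i : ℕ)) := by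
            refine Finset.sum_congr rfl fun i _ => ?_
            rw [hpow, Finset.mul_sum]
            refine Finset.sum_congr rfl fun j _ => ?_
            ring
        _ = ∑ j, algebraMap Fq F (c j) * ∑ i, a i * f j ^ q ^ (i : ℕ) := by
            rw [Finset.sum_comm]
            simp [Finset.mul_sum]
        _ = 0 := by simp [hrel]
    -- the combination map is injective
    have hinj : Function.Injective
        (fun c : Fin s → Fq => ∑ j, algebraMap Fq F (c j) * f j) := by
      intro c₁ c₂ hcc
      funext j
      have hcc' : (∑ j, algebraMap Fq F (c₁ j) * f j)
          = ∑ j, algebraMap Fq F (c₂ j) * f j := hcc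
      have hsum : ∑ j, (c₁ j - c₂ j) • f j = 0 := by
        simp only [Algebra.smul_def, map_sub, sub_mul, Finset.sum_sub_distrib]
        rw [hcc', sub_self]
      have := Fintype.linearIndependent_iff.1 hli _ hsum j
      exact sub_eq_zero.1 this
    -- degree bound
    have hs : 0 < s := i0.pos
    have hdeg : P.natDegree < Fintype.card (Fin s → Fq) := by
      have h1 : P.natDegree ≤ q ^ (s - 1) := by
        refine Polynomial.natDegree_sum_le_of_forall_le _ _ fun i _ => ?_
        refine (Polynomial.natDegree_C_mul_X_pow_le _ _).trans ?_
        exact Nat.pow_le_pow_right (by omega) (by omega)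
      have h2 : q ^ (s - 1) < q ^ s := Nat.pow_lt_pow_right hq1 (by omega)
      rw [Fintype.card_fun, Fintype.card_fin, ← hq]
      omega
    exact hPne (Polynomial.eq_zero_of_natDegree_lt_card_of_eval_eq_zero P hinj heval hdeg)
  · -- easy direction: nonzero determinant ⇒ linear independence
    intro hdet
    by_contra hli
    obtain ⟨g, hg0, i0, hgi0⟩ := Fintype.not_linearIndependent_iff.1 hli
    apply hdet
    rw [← Matrix.exists_mulVec_eq_zero_iff]
    refine ⟨fun j => algebraMap Fq F (g j), ?_, ?_⟩
    · intro h
      apply hgi0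
      have := congrFun h i0
      simpa using this
    · funext i
      have : (∑ j, algebraMap Fq F (g j) * f j) = 0 := by
        simpa [Algebra.smul_def] using hg0
      have h2 : (∑ j, algebraMap Fq F (g j) * f j) ^ q ^ (i : ℕ) = 0 := by
        rw [this, zero_pow (pow_ne_zero _ (by positivity))]
      calc (Matrix.of fun i j : Fin s => f j ^ q ^ (i : ℕ)).mulVec
              (fun j => algebraMap Fq F (g j)) i
          = ∑ j, f j ^ q ^ (i : ℕ) * algebraMap Fq F (g j) := by
            simp [Matrix.mulVec, dotProduct]
        _ = (∑ j, algebraMap Fq F (g j) * f j) ^ q ^ (i : ℕ) := by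
            rw [← hfrob (i : ℕ), map_sum]
            refine Finset.sum_congr rfl fun j _ => ?_
            rw [hfrob, mul_pow, halg, mul_comm]
        _ = 0 := h2
end

section
/- Let F be a field, σ a field automorphism of F, and let K = F^σ be the fixed field of σ. For any f_1, ..., f_s ∈ F, the σ-Moore determinant det(M_σ(f_1,...,f_s)) equals 0 if and only if f_1, ..., f_s are linearly dependent over K, where M_σ(f_1,...,f_s) is the s×s matrix with (i,j) entry f_j^{σ^{i-1}}. -/
/-- The fixed field `F^σ = {x ∈ F : σ x = x}` of a field automorphism `σ`. -/
def fixedSubfield {F : Type*} [Field F] (σ : F ≃+* F) : Subfield F where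
  carrier := {x | σ x = x}
  mul_mem' := fun ha hb => by simp only [Set.mem_setOf_eq, map_mul] at *; rw [ha, hb]
  one_mem' := map_one σ
  add_mem' := fun ha hb => by simp only [Set.mem_setOf_eq, map_add] at *; rw [ha, hb]
  zero_mem' := map_zero σ
  neg_mem' := fun ha => by simp only [Set.mem_setOf_eq, map_neg] at *; rw [ha]
  inv_mem' := fun x hx => by simp only [Set.mem_setOf_eq, map_inv₀] at *; rw [hx]

lemma fixed_pow_apply {F : Type*} [Field F] (σ : F ≃+* F) {x : F} (h : σ x = x) :
    ∀ i : ℕ, (σ ^ i) x = x := by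
  intro i
  induction i with
  | zero => rfl
  | succ n ih =>
    rw [pow_succ]
    show (σ ^ n) (σ x) = x
    rw [h, ih]

lemma fixed_smul_eq_mul {F : Type*} [Field F] (σ : F ≃+* F)
    (x : fixedSubfield σ) (y : F) : x • y = (x : F) * y := rfl

lemma moore_det_ne_zero {F : Type*} [Field F] (σ : F ≃+* F) :
    ∀ (s : ℕ) (f : Fin s → F), LinearIndependent (fixedSubfield σ) f →
      Matrix.det (Matrix.of fun i j : Fin s => (σ ^ (i : ℕ)) (f j)) ≠ 0 := by
  intro s
  induction s with
  | zero => intro f _; simp [Matrix.det_isEmpty]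
  | succ s ih =>
    intro f hf hdet
    have hf' : LinearIndependent (fixedSubfield σ) (f ∘ Fin.castSucc) :=
      hf.comp _ (Fin.castSucc_injective s)
    have hdet' : Matrix.det (Matrix.of fun i j : Fin s => (σ ^ (i : ℕ)) (f j.castSucc)) ≠ 0 :=
      ih (f ∘ Fin.castSucc) hf'
    obtain ⟨c, hc0, hMc⟩ := Matrix.exists_mulVec_eq_zero_iff.mpr hdet
    have heq : ∀ i : Fin (s+1), ∑ j : Fin (s+1), (σ ^ (i : ℕ)) (f j) * c j = 0 := by
      intro i
      have := congrFun hMc i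
      simpa [Matrix.mulVec, dotProduct] using this
    have hlast : c (Fin.last s) ≠ 0 := by
      intro h0
      apply hdet'
      rw [← Matrix.exists_mulVec_eq_zero_iff]
      refine ⟨fun j => c j.castSucc, ?_, ?_⟩
      · intro hzero
        apply hc0
        funext j
        refine Fin.lastCases ?_ ?_ j
        · exact h0
        · intro k; exact congrFun hzero k
      · funext i
        have := heq i.castSucc
        rw [Fin.sum_univ_castSucc] at this
        simp only [h0, mul_zero, add_zero] at this
        simpa [Matrix.mulVec, dotProduct, Fin.coe_castSucc] using this
    set k := c (Fin.last s) with hk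
    set c₁ : Fin (s+1) → F := fun j => k⁻¹ * c j with hc₁def
    have heq₁ : ∀ i : Fin (s+1), ∑ j : Fin (s+1), (σ ^ (i : ℕ)) (f j) * c₁ j = 0 := by
      intro i
      have h : ∑ j : Fin (s+1), (σ ^ (i : ℕ)) (f j) * (k⁻¹ * c j)
          = k⁻¹ * ∑ j : Fin (s+1), (σ ^ (i : ℕ)) (f j) * c j := by
        rw [Finset.mul_sum]; apply Finset.sum_congr rfl; intro j _; ring
      show ∑ j : Fin (s+1), (σ ^ (i : ℕ)) (f j) * (k⁻¹ * c j) = 0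
      rw [h, heq i, mul_zero]
    have hc₁last : c₁ (Fin.last s) = 1 := inv_mul_cancel₀ hlast
    set d : Fin s → F := fun j => c₁ j.castSucc - σ (c₁ j.castSucc) with hd
    have hNd : ∀ i : Fin s, ∑ j : Fin s, σ ((σ ^ (i : ℕ)) (f j.castSucc)) * d j = 0 := by
      intro i
      have h1 : ∑ j : Fin (s+1), (σ ^ ((i : ℕ) + 1)) (f j) * c₁ j = 0 := by
        have := heq₁ i.succ
        simpa [Fin.val_succ] using this
      have h2 : ∑ j : Fin (s+1), (σ ^ ((i : ℕ) + 1)) (f j) * σ (c₁ j) = 0 := by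
        have h := congrArg σ (heq₁ i.castSucc)
        rw [map_sum, map_zero] at h
        simp only [Fin.coe_castSucc] at h
        rw [← h]
        refine Finset.sum_congr rfl fun j _ => ?_
        have e1 : ((σ : F ≃+* F) ^ ((i : ℕ) + 1)) (f j) = σ ((σ ^ (i : ℕ)) (f j)) := by
          rw [pow_succ']; rfl
        rw [e1, ← map_mul]
      have h3 : ∑ j : Fin (s+1), (σ ^ ((i : ℕ) + 1)) (f j) * (c₁ j - σ (c₁ j)) = 0 := by
        rw [show (fun j => (σ ^ ((i : ℕ) + 1)) (f j) * (c₁ j - σ (c₁ j)))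
            = fun j => (σ ^ ((i : ℕ) + 1)) (f j) * c₁ j
              - (σ ^ ((i : ℕ) + 1)) (f j) * σ (c₁ j) from funext fun j => by ring]
        rw [Finset.sum_sub_distrib, h1, h2, sub_zero]
      rw [Fin.sum_univ_castSucc, hc₁last, map_one, sub_self, mul_zero, add_zero] at h3
      rw [← h3]
      apply Finset.sum_congr rfl
      intro j _
      congr 1
      rw [pow_succ']
      rfl
    have hdetN : Matrix.det
        (Matrix.of fun i j : Fin s => σ ((σ ^ (i : ℕ)) (f j.castSucc))) ≠ 0 := by
      have hEq : (Matrix.of fun i j : Fin s => σ ((σ ^ (i : ℕ)) (f j.castSucc)))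
          = (σ : F →+* F).mapMatrix (Matrix.of fun i j : Fin s => (σ ^ (i : ℕ)) (f j.castSucc)) := by
        ext i j; rfl
      rw [hEq, ← RingHom.map_det]
      intro h
      exact hdet' (σ.injective (by rw [map_zero]; exact h))
    have hd0 : d = 0 := by
      by_contra hdne
      apply hdetN
      rw [← Matrix.exists_mulVec_eq_zero_iff]
      exact ⟨d, hdne, funext fun i => by
        simpa [Matrix.mulVec, dotProduct] using hNd i⟩
    have hcK : ∀ j : Fin (s+1), σ (c₁ j) = c₁ j := by
      intro j
      refine Fin.lastCases ?_ ?_ j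
      · rw [hc₁last, map_one]
      · intro j
        have := congrFun hd0 j
        simp only [hd, Pi.zero_apply, sub_eq_zero] at this
        exact this.symm
    rw [Fintype.linearIndependent_iff] at hf
    have h0 : ∑ j : Fin (s+1), (⟨c₁ j, hcK j⟩ : fixedSubfield σ) • f j = 0 := by
      have h := heq₁ 0
      simp only [Fin.val_zero, pow_zero] at h
      rw [← h]
      refine Finset.sum_congr rfl fun j _ => ?_
      rw [fixed_smul_eq_mul, mul_comm (c₁ j) (f j)]
      rfl
    have := hf (fun j => ⟨c₁ j, hcK j⟩) h0 (Fin.last s)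
    rw [Subtype.ext_iff] at this
    simp only [hc₁last] at this
    exact one_ne_zero this

/-- Let `F` be a field, `σ` a field automorphism of `F` and
`K = F^σ` its fixed field.  For any `f_1, …, f_s ∈ F` the `σ`-Moore determinant
`det (σ^(i-1) (f_j))` vanishes iff `f_1, …, f_s` are linearly dependent over `K`. -/
theorem sigma_moore_det_eq_zero_iff_linearDependent
    {F : Type*} [Field F] (σ : F ≃+* F) (s : ℕ) (f : Fin s → F) :
    Matrix.det (Matrix.of fun i j : Fin s => (σ ^ (i : ℕ)) (f j)) = 0 ↔
      ¬ LinearIndependent (fixedSubfield σ) f := by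
  constructor
  · intro hdet hli
    exact moore_det_ne_zero σ s f hli hdet
  · intro hdep
    rw [Fintype.not_linearIndependent_iff] at hdep
    obtain ⟨g, hsum, j₀, hj₀⟩ := hdep
    rw [← Matrix.exists_mulVec_eq_zero_iff]
    refine ⟨fun j => (g j : F), ?_, ?_⟩
    · intro h
      apply hj₀
      have := congrFun h j₀
      exact Subtype.ext this
    · funext i
      show ∑ j, (σ ^ (i : ℕ)) (f j) * (g j : F) = 0
      have h1 : ∑ j, (σ ^ (i : ℕ)) (f j) * (g j : F)
          = (σ ^ (i : ℕ)) (∑ j, (g j : F) * f j) := by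
        rw [map_sum]
        apply Finset.sum_congr rfl
        intro j _
        rw [map_mul, fixed_pow_apply σ (g j).2 i, mul_comm]
      have h2 : ∑ j, ((g j : F) * f j) = 0 := by
        rw [← hsum]
        apply Finset.sum_congr rfl
        intro j _
        rw [fixed_smul_eq_mul σ]
      rw [h1, h2, map_zero]
end

section
/- Let F be a field and σ an automorphism of F with fixed field K. If f_2, ..., f_s ∈ F are linearly independent over K and B_2, ..., B_s ∈ F satisfy σ^i(f_1) + B_2 σ^i(f_2) + ... + B_s σ^i(f_s) = 0 for all i = 0, 1, ..., s-1, then B_j ∈ K for all j and f_1, ..., f_s are linearly dependent over K. -/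
theorem moore_inductive_step'
    {F : Type*} [Field F] (σ : F ≃+* F) (K : Subfield F)
    (hKmem : ∀ x : F, x ∈ K ↔ σ x = x) (n : ℕ)
    (f₁ : F) (f : Fin n → F) (B : Fin n → F)
    (hind : LinearIndependent K f)
    (heq : ∀ i : ℕ, i ≤ n → (σ ^ i) f₁ + ∑ j, B j * (σ ^ i) (f j) = 0) :
    (∀ j, B j ∈ K) ∧
      ¬ LinearIndependent K (Fin.cons f₁ f : Fin (n + 1) → F) := by
  induction n generalizing f₁ with
  | zero =>
    have h0 := heq 0 le_rfl
    simp only [Finset.univ_eq_empty, Finset.sum_empty, add_zero, pow_zero] at h0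
    have hf0 : f₁ = 0 := h0
    refine ⟨fun j => j.elim0, fun h => ?_⟩
    exact (h.ne_zero 0) (by simp [hf0])
  | succ m ih =>
    have key : ∀ j, σ (B j) = B j := by
      by_contra hcon
      push_neg at hcon
      obtain ⟨j₀, hj₀⟩ := hcon
      set D : Fin (m + 1) → F := fun j => σ.symm (σ (B j) - B j) with hD
      have hD0 : D j₀ ≠ 0 := by
        simp only [hD]
        intro h
        have := congrArg σ h
        rw [RingEquiv.apply_symm_apply, map_zero] at this
        exact hj₀ (sub_eq_zero.mp this)
      have hDsum : ∀ i : ℕ, i ≤ m → ∑ j, D j * (σ ^ i) (f j) = 0 := by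
        intro i hi
        have h1 := heq i (by omega)
        have h2 := heq (i + 1) (by omega)
        have hpow : ∀ x : F, σ ((σ ^ i) x) = (σ ^ (i + 1)) x := fun x => by
          rw [pow_succ']; rfl
        have h3 : (σ ^ (i+1)) f₁ + ∑ j, σ (B j) * (σ ^ (i+1)) (f j) = 0 := by
          have := congrArg σ h1
          simpa only [map_add, map_sum, map_mul, map_zero, hpow] using this
        have h4 : ∑ j, (σ (B j) - B j) * (σ ^ (i+1)) (f j) = 0 := by
          have := sub_eq_zero.mpr (h3.trans h2.symm)
          rw [add_sub_add_left_eq_sub, ← Finset.sum_sub_distrib] at this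
          simpa only [sub_mul] using this
        have := congrArg σ.symm h4
        rw [map_sum, map_zero] at this
        calc ∑ j, D j * (σ ^ i) (f j)
            = ∑ j, σ.symm ((σ (B j) - B j) * (σ ^ (i+1)) (f j)) := by
              refine Finset.sum_congr rfl fun j _ => ?_
              rw [map_mul, hD]
              congr 1
              rw [← hpow, RingEquiv.symm_apply_apply]
          _ = 0 := this
      -- apply induction hypothesis
      set B' : Fin m → F := fun j => D (j₀.succAbove j) / D j₀ with hB'
      have heq' : ∀ i : ℕ, i ≤ m →
          (σ ^ i) (f j₀) + ∑ j, B' j * (σ ^ i) (f (j₀.succAbove j)) = 0 := by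
        intro i hi
        have hs := hDsum i hi
        rw [Fin.sum_univ_succAbove _ j₀] at hs
        have : ∑ j, B' j * (σ ^ i) (f (j₀.succAbove j))
            = (∑ j, D (j₀.succAbove j) * (σ ^ i) (f (j₀.succAbove j))) / D j₀ := by
          rw [Finset.sum_div]
          exact Finset.sum_congr rfl fun j _ => by rw [hB', div_mul_eq_mul_div]
        rw [this]
        field_simp
        linear_combination hs
      have hind' : LinearIndependent K (fun j => f (j₀.succAbove j)) :=
        hind.comp j₀.succAbove Fin.succAbove_right_injective
      obtain ⟨-, hnotli⟩ := ih (f j₀) (fun j => f (j₀.succAbove j)) B' hind' heq'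
      apply hnotli
      have einj : Function.Injective
          (Fin.cons j₀ j₀.succAbove : Fin (m + 1) → Fin (m + 1)) := by
        intro a b hab
        induction a using Fin.cases with
        | zero =>
          induction b using Fin.cases with
          | zero => rfl
          | succ b =>
            simp only [Fin.cons_zero, Fin.cons_succ] at hab
            exact absurd hab.symm (Fin.succAbove_ne j₀ b)
        | succ a =>
          induction b using Fin.cases with
          | zero =>
            simp only [Fin.cons_zero, Fin.cons_succ] at hab
            exact absurd hab (Fin.succAbove_ne j₀ a)
          | succ b =>
            simp only [Fin.cons_succ] at hab
            exact congrArg Fin.succ (Fin.succAbove_right_injective hab)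
      have := hind.comp _ einj
      rwa [Fin.comp_cons] at this
    refine ⟨fun j => (hKmem (B j)).mpr (key j), ?_⟩
    rw [Fintype.not_linearIndependent_iff]
    refine ⟨Fin.cons 1 (fun j => ⟨B j, (hKmem (B j)).mpr (key j)⟩), ?_, 0, ?_⟩
    · rw [Fin.sum_univ_succ]
      simp only [Fin.cons_zero, Fin.cons_succ, one_smul]
      have h0 := heq 0 (Nat.zero_le _)
      rw [pow_zero] at h0
      have : ∀ j : Fin (m+1),
          (⟨B j, (hKmem (B j)).mpr (key j)⟩ : K) • f j = B j * f j := fun j => rfl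
      simp only [this]
      simpa using h0
    · simp only [Fin.cons_zero]
      exact one_ne_zero

/-- Let `σ` be a field automorphism of `F` with fixed field `K`.
If `f_2, …, f_s` (here `f : Fin n → F` with `s = n + 1`) are linearly independent
over `K` and `B_2, …, B_s ∈ F` satisfy
`σ^i (f_1) + B_2 σ^i (f_2) + … + B_s σ^i (f_s) = 0` for all `i = 0, 1, …, s-1`,
then every `B_j` lies in `K` and `f_1, f_2, …, f_s` are linearly dependent over `K`. -/
theorem moore_inductive_step
    {F : Type*} [Field F] (σ : F ≃+* F) (n : ℕ)
    (f₁ : F) (f : Fin n → F) (B : Fin n → F)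
    (hind : LinearIndependent (fixedSubfield σ) f)
    (heq : ∀ i : ℕ, i ≤ n → (σ ^ i) f₁ + ∑ j, B j * (σ ^ i) (f j) = 0) :
    (∀ j, B j ∈ fixedSubfield σ) ∧
      ¬ LinearIndependent (fixedSubfield σ) (Fin.cons f₁ f : Fin (n + 1) → F) :=
  moore_inductive_step' σ (fixedSubfield σ) (fun _ => Iff.rfl) n f₁ f B hind heq
end

section
/- Let γ be a generator of the multiplicative group of the finite field F_q, and let σ be the F_q-algebra automorphism of F_q[X] sending X to γX. If polynomials f_1, ..., f_s ∈ F_q[X], each of degree less than q-1, are linearly independent over F_q, then the determinant of the s×s matrix whose (i,j) entry is f_j(γ^{i-1} X) is a nonzero polynomial in F_q[X]. -/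
/-!
Let `σ` be the automorphism of `K = F_q(X)` extending `p(X) ↦ p(γX)`. The rows of the matrix are
`σ^i (f_1), …, σ^i (f_s)`, so a vanishing determinant gives, by the argument of Artin's lemma, a
nonzero relation `∑ f_j e_j = 0` with `σ`-fixed coefficients `e_j ∈ K`. Multiplying by a
`σ`-invariant norm of a common denominator turns it into a relation with `σ`-fixed polynomial
coefficients. As `γ` has order `q - 1`, these lie in `F_q[X^(q-1)]`; since `deg f_j < q - 1`,
comparing coefficients in each window `[m(q-1), (m+1)(q-1))` reduces the relation to relations
over `F_q`, which vanish by linear independence.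
-/

open Polynomial

section Casoratian

variable {K : Type*} [Field K] (σ : K ≃+* K)

theorem exists_fixed_relation_of_relations {t : ℕ} (g c : Fin t → K) (hc : c ≠ 0)
    (hrel : ∀ i < t, ∑ j, (σ ^ i) (g j) * c j = 0) :
    ∃ e : Fin t → K, e ≠ 0 ∧ (∀ j, σ (e j) = e j) ∧ ∑ j, g j * e j = 0 := by
  induction t with
  | zero => exact absurd (Subsingleton.elim c 0) hc
  | succ t ih =>
    have of_last_eq_zero : ∀ w : Fin (t + 1) → K, w ≠ 0 → w (Fin.last t) = 0 →
        (∀ i < t, ∑ j, (σ ^ i) (g j) * w j = 0) →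
        ∃ e : Fin (t + 1) → K, e ≠ 0 ∧ (∀ j, σ (e j) = e j) ∧ ∑ j, g j * e j = 0 := by
      intro w hw hlast hwrel
      have hinit : (fun j : Fin t ↦ w j.castSucc) ≠ 0 := fun h ↦ hw <| funext fun j ↦ by
        induction j using Fin.lastCases with
        | last => exact hlast
        | cast j => exact congrFun h j
      obtain ⟨e, he, hfix, hsum⟩ := ih (fun j ↦ g j.castSucc) _ hinit fun i hi ↦ by
        simpa [Fin.sum_univ_castSucc, hlast] using hwrel i hi
      refine ⟨Fin.snoc e 0, fun h ↦ he (funext fun j ↦ by simpa using congrFun h j.castSucc),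
        fun j ↦ ?_, by simpa [Fin.sum_univ_castSucc] using hsum⟩
      induction j using Fin.lastCases <;> simp [hfix]
    by_cases hlast : c (Fin.last t) = 0
    · exact of_last_eq_zero c hc hlast fun i hi ↦ hrel i (by omega)
    set c' := (c (Fin.last t))⁻¹ • c
    have hc'last : c' (Fin.last t) = 1 := inv_mul_cancel₀ hlast
    have hrel' : ∀ i < t + 1, ∑ j, (σ ^ i) (g j) * c' j = 0 := fun i hi ↦ by
      simp only [c', Pi.smul_apply, smul_eq_mul, mul_left_comm _ (c (Fin.last t))⁻¹,
        ← Finset.mul_sum, hrel i hi, mul_zero]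
    by_cases hfix : ∀ j, σ (c' j) = c' j
    · refine ⟨c', fun h ↦ ?_, hfix, by simpa using hrel' 0 (by omega)⟩
      simp [h] at hc'last
    -- Applying `σ⁻¹` to row `i + 1` gives row `i` for `σ⁻¹ c'`; the difference has last entry `0`.
    push Not at hfix
    obtain ⟨j₀, hj₀⟩ := hfix
    refine of_last_eq_zero (fun j ↦ σ.symm (c' j) - c' j) (fun h ↦ hj₀ ?_) (by simp [hc'last])
      fun i hi ↦ ?_
    · have := congrFun h j₀
      rw [Pi.zero_apply, sub_eq_zero] at this
      exact (σ.symm_apply_eq.mp this).symm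
    · have hshift : ∑ j, (σ ^ i) (g j) * σ.symm (c' j) = 0 := by
        simpa [pow_succ'] using congrArg σ.symm (hrel' (i + 1) (by omega))
      simp only [mul_sub, Finset.sum_sub_distrib, hshift, hrel' i (by omega), sub_zero]

theorem exists_fixed_relation_of_det_eq_zero {t : ℕ} (g : Fin t → K)
    (h : (Matrix.of fun i j : Fin t ↦ (σ ^ (i : ℕ)) (g j)).det = 0) :
    ∃ e : Fin t → K, e ≠ 0 ∧ (∀ j, σ (e j) = e j) ∧ ∑ j, g j * e j = 0 := by
  obtain ⟨v, hv, hMv⟩ := Matrix.exists_mulVec_eq_zero_iff.mpr h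
  exact exists_fixed_relation_of_relations σ g v hv fun i hi ↦ by
    simpa [Matrix.mulVec, dotProduct] using congrFun hMv ⟨i, hi⟩

end Casoratian

section Descent

variable {R K : Type*} [CommRing R] [IsDomain R] [Field K] [Algebra R K] [IsFractionRing R K]

-- `c * b` is the norm `∏_{i < orderOf τ} τ^i b` of `b`.
theorem exists_ne_zero_mul_fixed (τ : R ≃+* R) (hτ : IsOfFinOrder τ) {b : R} (hb : b ≠ 0) :
    ∃ c : R, c ≠ 0 ∧ τ (c * b) = c * b := by
  obtain ⟨m, hm⟩ : ∃ m, orderOf τ = m + 1 := Nat.exists_eq_add_one.mpr hτ.orderOf_pos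
  have hperiod : (τ ^ (m + 1)) b = b := by rw [← hm, pow_orderOf_eq_one]; rfl
  have hshift : ∀ i, τ ((τ ^ i) b) = (τ ^ (i + 1)) b := fun i ↦ by rw [pow_succ', RingAut.mul_apply]
  refine ⟨∏ i ∈ Finset.range m, (τ ^ (i + 1)) b,
    Finset.prod_ne_zero_iff.mpr fun i _ ↦ (τ ^ (i + 1)).map_ne_zero_iff.mpr hb, ?_⟩
  calc τ ((∏ i ∈ Finset.range m, (τ ^ (i + 1)) b) * b)
      = ∏ i ∈ Finset.range (m + 1), (τ ^ (i + 1)) b := by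
        rw [Finset.prod_range_succ', map_mul, map_prod, pow_one]
        simp only [hshift]
    _ = (∏ i ∈ Finset.range m, (τ ^ (i + 1)) b) * b := by rw [Finset.prod_range_succ, hperiod]

theorem exists_fixed_relation_of_fixed_relation {ι : Type*} [Fintype ι] (τ : R ≃+* R)
    (hτ : IsOfFinOrder τ) (f : ι → R) (e : ι → K) (he : e ≠ 0)
    (hfix : ∀ j, IsFractionRing.ringEquivOfRingEquiv τ (e j) = e j)
    (hrel : ∑ j, algebraMap R K (f j) * e j = 0) :
    ∃ A : ι → R, A ≠ 0 ∧ (∀ j, τ (A j) = A j) ∧ ∑ j, f j * A j = 0 := by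
  obtain ⟨b, hb⟩ := IsLocalization.exist_integer_multiples_of_finite (nonZeroDivisors R) e
  choose a ha using hb
  obtain ⟨c, hc, hcb⟩ := exists_ne_zero_mul_fixed τ hτ (nonZeroDivisors.ne_zero b.2)
  have hinj := IsFractionRing.injective R K
  have hN : algebraMap R K (c * b) ≠ 0 :=
    (map_ne_zero_iff _ hinj).mpr (mul_ne_zero hc (nonZeroDivisors.ne_zero b.2))
  have hca : ∀ j, algebraMap R K (c * a j) = algebraMap R K (c * b) * e j := fun j ↦ by
    rw [map_mul, ha, Algebra.smul_def, map_mul, mul_assoc]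
  refine ⟨fun j ↦ c * a j, fun h ↦ he (funext fun j ↦ ?_), fun j ↦ hinj ?_, hinj ?_⟩
  · have hj := congrArg (algebraMap R K) (congrFun h j)
    rw [hca, Pi.zero_apply, map_zero] at hj
    exact (mul_eq_zero.mp hj).resolve_left hN
  · rw [← IsFractionRing.ringEquivOfRingEquiv_algebraMap (K := K) (L := K), hca, map_mul,
      IsFractionRing.ringEquivOfRingEquiv_algebraMap, hcb, hfix]
  · rw [map_sum, map_zero, ← mul_zero (algebraMap R K (c * b)), ← hrel, Finset.mul_sum]
    refine Finset.sum_congr rfl fun j _ ↦ ?_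
    rw [map_mul, hca, mul_left_comm]

end Descent

namespace Polynomial

variable {R : Type*} [CommRing R]

noncomputable def scaleX : Rˣ →* (R[X] ≃+* R[X]) where
  toFun u := (algEquivOfCompEqX (C (u : R) * X) (C ↑u⁻¹ * X)
    (by simp [← mul_assoc, ← C_mul]) (by simp [← mul_assoc, ← C_mul])).toRingEquiv
  map_one' := by ext p : 1; simp
  map_mul' u v := by
    ext p : 1
    simp only [AlgEquiv.coe_ringEquiv, algEquivOfCompEqX_apply, RingAut.mul_apply,
      ← comp_eq_aeval, comp_assoc, mul_comp, C_comp, X_comp, Units.val_mul, C_mul]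
    ring_nf

theorem scaleX_apply (u : Rˣ) (p : R[X]) : scaleX u p = p.comp (C (u : R) * X) := by
  simp [scaleX, ← comp_eq_aeval]

theorem orderOf_dvd_of_scaleX_eq_self [IsDomain R] {u : Rˣ} {p : R[X]} (hp : scaleX u p = p)
    {k : ℕ} (hk : p.coeff k ≠ 0) : orderOf u ∣ k := by
  have hcoeff := congrArg (coeff · k) hp
  simp only [scaleX_apply, comp_C_mul_X_coeff] at hcoeff
  refine orderOf_dvd_of_pow_eq_one (Units.ext ?_)
  simpa using mul_left_cancel₀ hk (hcoeff.trans (mul_one _).symm)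

theorem expand_contract_of_dvd {n : ℕ} (hn : n ≠ 0) {p : R[X]}
    (hp : ∀ k, p.coeff k ≠ 0 → n ∣ k) : expand R n (contract n p) = p := by
  ext k
  rw [coeff_expand (Nat.pos_of_ne_zero hn)]
  split_ifs with hk
  · rw [coeff_contract hn, Nat.div_mul_cancel hk]
  · exact (not_imp_comm.mp (hp k) hk).symm

theorem coeff_expand_mul_add {n : ℕ} (hn : 0 < n) (B : R[X]) {f : R[X]} (hf : f.degree < n)
    (m : ℕ) {r : ℕ} (hr : r < n) :
    (expand R n B * f).coeff (m * n + r) = B.coeff m * f.coeff r := by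
  rw [coeff_mul, Finset.sum_eq_single (m * n, r) ?_ fun h ↦ absurd (by simp) h,
    coeff_expand_mul hn]
  rintro ⟨k, l⟩ hkl hne
  rw [Finset.HasAntidiagonal.mem_antidiagonal] at hkl
  rw [coeff_expand hn]
  split_ifs with hk
  · obtain ⟨a, rfl⟩ := hk
    by_cases hl : l < n
    · -- `n * a + l = m * n + r` with `l, r < n` forces `a = m` and `l = r`
      have h₁ := (Nat.div_mod_unique hn).mpr ⟨(by rw [← hkl]; ring : l + n * a = m * n + r), hl⟩
      have h₂ := (Nat.div_mod_unique hn).mpr ⟨(by ring : r + n * m = m * n + r), hr⟩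
      obtain ⟨rfl, rfl⟩ : a = m ∧ l = r := ⟨h₁.1.symm.trans h₂.1, h₁.2.symm.trans h₂.2⟩
      exact absurd (by rw [mul_comm]) hne
    · rw [coeff_eq_zero_of_degree_lt (hf.trans_le (by exact_mod_cast not_lt.mp hl)), mul_zero]
  · rw [zero_mul]

theorem eq_zero_of_sum_expand_mul_eq_zero {ι : Type*} [Fintype ι] {n : ℕ} (hn : 0 < n)
    {f : ι → R[X]} (hf : LinearIndependent R f) (hdeg : ∀ j, (f j).degree < n) {B : ι → R[X]}
    (h : ∑ j, expand R n (B j) * f j = 0) : B = 0 := by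
  funext j
  ext m
  have hm : ∑ j, (B j).coeff m • f j = 0 := by
    ext r
    simp only [finsetSum_coeff, coeff_smul, smul_eq_mul, coeff_zero]
    by_cases hr : r < n
    · simpa [finsetSum_coeff, coeff_expand_mul_add hn _ (hdeg _) m hr] using
        congrArg (coeff · (m * n + r)) h
    · simp [coeff_eq_zero_of_degree_lt ((hdeg _).trans_le (by exact_mod_cast not_lt.mp hr))]
  exact Fintype.linearIndependent_iff.mp hf _ hm j

end Polynomial

/-- Let `γ` generate `F_qˣ`.  If `f_1, …, f_s ∈ F_q[X]`, each of degree
less than `q - 1`, are linearly independent over `F_q`, then the folded Wronskian, i.e.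
the determinant of the matrix with `(i,j)` entry `f_j (γ^(i-1) X)`, is a nonzero
polynomial. -/
theorem folded_wronskian_ne_zero
    (Fq : Type*) [Field Fq] [Fintype Fq]
    (γ : Fqˣ) (hγ : ∀ u : Fqˣ, u ∈ Subgroup.zpowers γ)
    (s : ℕ) (f : Fin s → Polynomial Fq)
    (hdeg : ∀ j, (f j).degree < (Fintype.card Fq - 1 : ℕ))
    (hli : LinearIndependent Fq f) :
    Matrix.det (Matrix.of fun i j : Fin s =>
      (f j).comp (Polynomial.C ((γ : Fq) ^ (i : ℕ)) * Polynomial.X)) ≠ 0 := by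
  have horder : orderOf γ = Fintype.card Fq - 1 := by
    rw [orderOf_eq_card_of_forall_mem_zpowers hγ, Nat.card_units, Nat.card_eq_fintype_card]
  let K := FractionRing Fq[X]
  let σ : K ≃+* K := IsFractionRing.ringEquivOfRingEquivHom Fq[X] K (scaleX γ)
  have hσ : ∀ (i : ℕ) (p : Fq[X]), (σ ^ i) (algebraMap Fq[X] K p) =
      algebraMap Fq[X] K (p.comp (C ((γ : Fq) ^ i) * X)) := fun i p ↦ by
    rw [← map_pow, ← map_pow,
      IsFractionRing.ringEquivOfRingEquivHom_apply, IsFractionRing.ringEquivOfRingEquiv_algebraMap,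
      scaleX_apply, Units.val_pow_eq_pow_val]
  intro hdet
  have hcas : (Matrix.of fun i j : Fin s ↦ (σ ^ (i : ℕ)) (algebraMap Fq[X] K (f j))).det = 0 := by
    have hmap : (Matrix.of fun i j : Fin s ↦ (σ ^ (i : ℕ)) (algebraMap Fq[X] K (f j))) =
        (algebraMap Fq[X] K).mapMatrix
          (Matrix.of fun i j : Fin s ↦ (f j).comp (C ((γ : Fq) ^ (i : ℕ)) * X)) := by
      ext i j
      simp [hσ]
    rw [hmap, ← RingHom.map_det, hdet, map_zero]
  obtain ⟨e, he, hfix, hrel⟩ := exists_fixed_relation_of_det_eq_zero σ _ hcas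
  obtain ⟨A, hA, hAfix, hArel⟩ := exists_fixed_relation_of_fixed_relation (scaleX γ)
    (scaleX.isOfFinOrder (isOfFinOrder_of_finite γ)) f e he hfix hrel
  have hexpand : ∀ j, expand Fq (orderOf γ) (contract (orderOf γ) (A j)) = A j := fun j ↦
    expand_contract_of_dvd (orderOf_pos γ).ne' fun _ ↦ orderOf_dvd_of_scaleX_eq_self (hAfix j)
  have hB := eq_zero_of_sum_expand_mul_eq_zero (orderOf_pos γ) hli (by rwa [horder])
    (B := fun j ↦ contract (orderOf γ) (A j)) (by simpa only [hexpand, mul_comm] using hArel)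
  exact hA (funext fun j ↦ by rw [← hexpand j, congrFun hB j, Pi.zero_apply, map_zero])
end

section
/- Let γ be a primitive element of F_q and let A_1, ..., A_s ∈ F_q[X], not all zero. Then the F_q-vector space of polynomials f ∈ F_q[X] of degree less than q-1 satisfying A_1(X) f(X) + A_2(X) f(γX) + ... + A_s(X) f(γ^{s-1} X) = 0 has dimension at most s-1. -/
/-!
Let `e` be the least exponent at which some `A i` has a nonzero coefficient. For a solution `f`
whose coefficients below `j` vanish, the coefficient of `X ^ (e + j)` in the equation is
`Q(γ ^ j) * f_j`, where `Q = ∑ i, (A i)_e X ^ i` is a nonzero polynomial of degree `≤ s - 1`.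
Hence a solution of degree `< q - 1` is determined by its coefficients `f_j` at the exponents
`j < q - 1` with `Q(γ ^ j) = 0`; since `γ` has order `q - 1`, the `γ ^ j` are distinct roots
of `Q`, so there are at most `s - 1` such exponents.
-/

open Polynomial Finset

namespace Polynomial

theorem exists_coeff_ne_zero_and_forall_lt_coeff_eq_zero {R ι : Type*} [Semiring R]
    {A : ι → R[X]} (hA : ∃ i, A i ≠ 0) :
    ∃ e, (∃ i, (A i).coeff e ≠ 0) ∧ ∀ k < e, ∀ i, (A i).coeff k = 0 := by
  classical
  obtain ⟨i, hi⟩ := hA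
  have hex : ∃ e, ∃ i, (A i).coeff e ≠ 0 := ⟨_, i, mt leadingCoeff_eq_zero.mp hi⟩
  exact ⟨Nat.find hex, Nat.find_spec hex, fun k hk i => by
    simpa using not_exists.mp (Nat.find_min hex hk) i⟩

section Dilation

variable {R ι : Type*} [CommSemiring R] [Fintype ι]

theorem coeff_aeval_C_mul_X (c : R) (f : R[X]) (j : ℕ) :
    (aeval (C c * X) f).coeff j = f.coeff j * c ^ j := by
  rw [← comp_eq_aeval, comp_C_mul_X_coeff]

theorem coeff_sum_mul_aeval_C_mul_X (A : ι → R[X]) (c : ι → R) (f : R[X]) {e j : ℕ}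
    (hA : ∀ k < e, ∀ i, (A i).coeff k = 0) (hf : ∀ l < j, f.coeff l = 0) :
    (∑ i, A i * aeval (C (c i) * X) f).coeff (e + j) =
      (∑ i, (A i).coeff e * c i ^ j) * f.coeff j := by
  simp only [finsetSum_coeff, coeff_mul, coeff_aeval_C_mul_X]
  rw [Finset.sum_comm, Finset.sum_eq_single (e, j)]
  · simp only [Finset.sum_mul]
    exact Finset.sum_congr rfl fun i _ => by ring
  · rintro ⟨k, l⟩ hkl hne
    rw [HasAntidiagonal.mem_antidiagonal] at hkl
    rcases lt_or_ge k e with hk | hk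
    · simp [hA k hk]
    · have hl : l < j := by grind
      simp [hf l hl]
  · simp

theorem eq_zero_of_sum_mul_aeval_C_mul_X_eq_zero [NoZeroDivisors R] {A : ι → R[X]}
    {c : ι → R} {f : R[X]} {e n : ℕ} (hA : ∀ k < e, ∀ i, (A i).coeff k = 0)
    (hsum : ∑ i, A i * aeval (C (c i) * X) f = 0) (hdeg : f.degree < n)
    (hcoeff : ∀ j < n, ∑ i, (A i).coeff e * c i ^ j = 0 → f.coeff j = 0) : f = 0 := by
  ext j
  induction j using Nat.strong_induction_on with
  | _ j ih =>
  rw [coeff_zero]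
  rcases lt_or_ge j n with hj | hj
  · by_cases hroot : ∑ i, (A i).coeff e * c i ^ j = 0
    · exact hcoeff j hj hroot
    · have hcoeff_ej := coeff_sum_mul_aeval_C_mul_X A c f hA fun l hl => by simpa using ih l hl
      rw [hsum, coeff_zero] at hcoeff_ej
      exact (mul_eq_zero.mp hcoeff_ej.symm).resolve_left hroot
  · exact coeff_eq_zero_of_degree_lt (hdeg.trans_le (by exact_mod_cast hj))

end Dilation

theorem finrank_degreeLT_inf_ker_sum_mulLeft_comp_aeval_le {K ι : Type*} [Field K]
    [DecidableEq K] [Fintype ι] (A : ι → K[X]) (c : ι → K) {e : ℕ}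
    (hA : ∀ k < e, ∀ i, (A i).coeff k = 0) (n : ℕ) :
    Module.finrank K ↥(degreeLT K n ⊓ LinearMap.ker (∑ i,
        (LinearMap.mulLeft K (A i)).comp (aeval (C (c i) * X)).toLinearMap)) ≤
      #{j ∈ range n | ∑ i, (A i).coeff e * c i ^ j = 0} := by
  set S := {j ∈ range n | ∑ i, (A i).coeff e * c i ^ j = 0}
  set V := degreeLT K n ⊓ LinearMap.ker (∑ i,
    (LinearMap.mulLeft K (A i)).comp (aeval (C (c i) * X)).toLinearMap)
  let coeffsOnS : V →ₗ[K] (S → K) :=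
    (LinearMap.pi fun j : S => lcoeff K j).comp V.subtype
  have hinj : Function.Injective coeffsOnS := by
    rw [← LinearMap.ker_eq_bot, Submodule.eq_bot_iff]
    rintro ⟨f, hdeg, hker⟩ hf
    have hS : ∀ j ∈ S, f.coeff j = 0 := fun j hj => congrFun hf ⟨j, hj⟩
    refine Subtype.ext (eq_zero_of_sum_mul_aeval_C_mul_X_eq_zero hA ?_ (mem_degreeLT.mp hdeg)
      fun j hj hroot => hS j (mem_filter.mpr ⟨mem_range.mpr hj, hroot⟩))
    simpa [LinearMap.sum_apply] using hker
  simpa using LinearMap.finrank_le_finrank_of_injective hinj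

theorem card_filter_eval_pow_eq_zero_le_natDegree {R : Type*} [CommRing R] [IsDomain R]
    [DecidableEq R] {Q : R[X]} (hQ : Q ≠ 0) (γ : R) :
    #{j ∈ range (orderOf γ) | Q.eval (γ ^ j) = 0} ≤ Q.natDegree := by
  set S := {j ∈ range (orderOf γ) | Q.eval (γ ^ j) = 0}
  have hinj : Set.InjOn (γ ^ ·) S := fun j hj j' hj' =>
    pow_injOn_Iio_orderOf (mem_range.mp (mem_filter.mp hj).1) (mem_range.mp (mem_filter.mp hj').1)
  rw [← card_image_of_injOn hinj]
  refine card_le_degree_of_subset_roots fun x hx => ?_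
  obtain ⟨j, hj, rfl⟩ := mem_image.mp (mem_def.mpr hx)
  exact (mem_roots hQ).mpr (mem_filter.mp hj).2

theorem coeff_sum_fin_C_mul_X_pow {R : Type*} [Semiring R] {s : ℕ} (a : Fin s → R) (i : Fin s) :
    (∑ k : Fin s, C (a k) * X ^ (k : ℕ)).coeff i = a i := by
  simp [finsetSum_coeff, Fin.val_inj]

end Polynomial

/-- Let `γ` be a primitive element of `F_q` and `A_1, …, A_s ∈ F_q[X]`,
not all zero.  The `F_q`-vector space of polynomials `f` of degree `< q - 1` with
`A_1(X) f(X) + A_2(X) f(γX) + … + A_s(X) f(γ^(s-1) X) = 0` has dimension at most `s - 1`. -/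
theorem folded_equation_solution_space_dim_le
    (Fq : Type*) [Field Fq] [Fintype Fq]
    (γ : Fqˣ) (hγ : ∀ u : Fqˣ, u ∈ Subgroup.zpowers γ)
    (s : ℕ) (A : Fin s → Polynomial Fq) (hA : ∃ i, A i ≠ 0) :
    Module.finrank Fq
      ↥(Polynomial.degreeLT Fq (Fintype.card Fq - 1) ⊓
        LinearMap.ker (∑ i : Fin s,
          (LinearMap.mulLeft Fq (A i)).comp
            (Polynomial.aeval (Polynomial.C ((γ : Fq) ^ (i : ℕ)) * Polynomial.X)).toLinearMap))
      ≤ s - 1 := by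
  classical
  obtain ⟨e, ⟨i₀, hi₀⟩, hlow⟩ := exists_coeff_ne_zero_and_forall_lt_coeff_eq_zero hA
  set Q : Fq[X] := ∑ i : Fin s, C ((A i).coeff e) * X ^ (i : ℕ)
  have hQi₀ : Q.coeff i₀ = (A i₀).coeff e := coeff_sum_fin_C_mul_X_pow _ i₀
  have hQ : Q ≠ 0 := fun h => hi₀ (by rw [← hQi₀, h, coeff_zero])
  have hQdeg : Q.natDegree < s := (natDegree_lt_iff_degree_lt hQ).mpr (degree_sum_fin_lt _)
  have hord : orderOf (γ : Fq) = Fintype.card Fq - 1 := by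
    rw [orderOf_units, orderOf_eq_card_of_forall_mem_zpowers hγ, Nat.card_eq_fintype_card,
      Fintype.card_units]
  have heval (j : ℕ) : ∑ i : Fin s, (A i).coeff e * ((γ : Fq) ^ (i : ℕ)) ^ j =
      Q.eval ((γ : Fq) ^ j) := by
    simp only [Q, eval_finsetSum, eval_mul, eval_C, eval_pow, eval_X, ← pow_mul, mul_comm]
  calc _ ≤ #{j ∈ range (Fintype.card Fq - 1) |
          ∑ i : Fin s, (A i).coeff e * ((γ : Fq) ^ (i : ℕ)) ^ j = 0} :=
        finrank_degreeLT_inf_ker_sum_mulLeft_comp_aeval_le A _ hlow _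
    _ = #{j ∈ range (orderOf (γ : Fq)) | Q.eval ((γ : Fq) ^ j) = 0} := by
        simp only [heval, hord]
    _ ≤ s - 1 := (card_filter_eval_pow_eq_zero_le_natDegree hQ _).trans (by omega)
end

section
/- Let F/K be a finite extension of function fields over F_q, let Q be a rational place of K (residue field F_q) and Q' a place of F lying above Q. Let D be a positive divisor of F with Q' not in the support of D, and let V be an F_q-subspace of the Riemann-Roch space L(D) with V ∩ L(D - Q') = {0}. Then any f_1, ..., f_s ∈ V that are linearly independent over F_q are also linearly independent over K. -/
private lemma aux_nonneg_of_le_add {x y : WithTop ℤ} (hy : y ≠ ⊤) (h : y ≤ x + y) : 0 ≤ x := by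
  cases x with
  | top => exact le_top
  | coe n =>
    cases y with
    | top => exact absurd rfl hy
    | coe m =>
      have h' : (m : ℤ) ≤ n + m := by exact_mod_cast h
      exact_mod_cast (by omega : (0:ℤ) ≤ n)

private lemma aux_one_le_of_pos {x : WithTop ℤ} (h : 0 < x) : 1 ≤ x := by
  cases x with
  | top => exact le_top
  | coe n =>
    have h' : (0:ℤ) < n := by exact_mod_cast h
    exact_mod_cast (by omega : (1:ℤ) ≤ n)

private lemma aux_one_le_nsmul {x : WithTop ℤ} (hx : 1 ≤ x) :
    ∀ e : ℕ, 0 < e → (1 : WithTop ℤ) ≤ e • x := by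
  intro e he
  induction e with
  | zero => omega
  | succ m ih =>
    rcases Nat.eq_zero_or_pos m with hm | hm
    · subst hm; simpa using hx
    · have h1 : (1 : WithTop ℤ) ≤ m • x := ih hm
      have h0 : (0 : WithTop ℤ) ≤ x := le_trans (by norm_num) hx
      calc (1 : WithTop ℤ) = 1 + 0 := (add_zero 1).symm
        _ ≤ m • x + x := add_le_add h1 h0
        _ = (m + 1) • x := (succ_nsmul x m).symm



/-- Lemma 3.1.  Let `F/K` be a finite extension of function fields
over `F_q`, `Q` a rational place of `K` (every residue at `Q` is a constant from `F_q`)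
and `Q'` a place of `F` above `Q`.  Let `D` be a positive divisor of `F` with
`Q' ∉ supp D`, and let `V` be an `F_q`-subspace of the Riemann–Roch space `L(D)` with
`V ∩ L(D - Q') = {0}`.  Then any `f_1, …, f_s ∈ V` linearly independent over `F_q`
are linearly independent over `K`.
Places are modelled by additive valuations `F → ℤ ∪ {∞}`. -/
theorem linearIndependent_over_K_of_linearIndependent_over_Fq
    (Fq K F : Type*) [Field Fq] [Fintype Fq] [Field K] [Field F]
    [Algebra Fq K] [Algebra Fq F] [Algebra K F] [IsScalarTower Fq K F]
    [FiniteDimensional K F]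
    -- the places of F
    (PlaceF : Type*) [DecidableEq PlaceF] (v : PlaceF → AddValuation F (WithTop ℤ))
    (hconst : ∀ P, ∀ c : Fq, c ≠ 0 → v P (algebraMap Fq F c) = 0)
    (Q' : PlaceF)
    -- the rational place Q of K, given by its valuation
    (vQ : AddValuation K (WithTop ℤ))
    (hconstK : ∀ c : Fq, c ≠ 0 → vQ (algebraMap Fq K c) = 0)
    (hQrat : ∀ x : K, vQ x = 0 → ∃ c : Fq, 0 < vQ (x - algebraMap Fq K c))
    -- `Q'` lies above `Q` with ramification index `e`
    (e : ℕ) (he : 0 < e)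
    (hlie : ∀ x : K, v Q' (algebraMap K F x) = e • vQ x)
    -- the positive divisor `D`, with `Q'` outside its support
    (D : PlaceF →₀ ℤ) (hDpos : ∀ P, 0 ≤ D P) (hQ'supp : D Q' = 0)
    -- `V ⊆ L(D)` and `V ∩ L(D - Q') = {0}`
    (V : Submodule Fq F)
    (hVLD : ∀ f ∈ V, ∀ P, (-(D P) : WithTop ℤ) ≤ v P f)
    (hVcap : ∀ f ∈ V,
      (∀ P, (-(D P - if P = Q' then 1 else 0) : WithTop ℤ) ≤ v P f) → f = 0)
    (s : ℕ) (f : Fin s → F) (hfV : ∀ i, f i ∈ V)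
    (hli : LinearIndependent Fq f) :
    LinearIndependent K f := by
  by_contra hnot
  obtain ⟨a, hsum, i₁, hi₁⟩ := Fintype.not_linearIndependent_iff.mp hnot
  obtain ⟨i0, -, hmin⟩ := Finset.exists_min_image Finset.univ (fun i => vQ (a i))
    ⟨i₁, Finset.mem_univ _⟩
  have ha0top : vQ (a i0) ≠ ⊤ := by
    intro h
    have h1 := hmin i₁ (Finset.mem_univ _)
    rw [h, top_le_iff] at h1
    exact hi₁ (vQ.top_iff.mp h1)
  have ha0 : a i0 ≠ 0 := fun h => ha0top (by simp [h])
  set b : Fin s → K := fun i => a i / a i0 with hb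
  have hbmul : ∀ i, b i * a i0 = a i := fun i => div_mul_cancel₀ _ ha0
  have hbval : ∀ i, 0 ≤ vQ (b i) := by
    intro i
    apply aux_nonneg_of_le_add ha0top
    have : vQ (a i) = vQ (b i) + vQ (a i0) := by rw [← hbmul i, vQ.map_mul]
    rw [← this]; exact hmin i (Finset.mem_univ _)
  have hb0 : vQ (b i0) = 0 := by
    simp only [hb]; rw [div_self ha0, vQ.map_one]
  -- the constants
  set c : Fin s → Fq := fun i =>
    if h : vQ (b i) = 0 then (hQrat (b i) h).choose else 0 with hc
  have hcpos : ∀ i, 0 < vQ (b i - algebraMap Fq K (c i)) := by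
    intro i
    by_cases h : vQ (b i) = 0
    · simp only [hc, dif_pos h]; exact (hQrat (b i) h).choose_spec
    · simp only [hc, dif_neg h, map_zero, sub_zero]
      exact lt_of_le_of_ne (hbval i) (Ne.symm h)
  -- the relation for b
  have hbsum : ∑ i, b i • f i = 0 := by
    have : ∑ i, b i • f i = (a i0)⁻¹ • ∑ i, a i • f i := by
      rw [Finset.smul_sum]
      refine Finset.sum_congr rfl fun i _ => ?_
      rw [smul_smul, hb]; congr 1; field_simp
    rw [this, hsum, smul_zero]
  -- the element g
  set g : F := ∑ i, c i • f i with hg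
  have hgV : g ∈ V := Submodule.sum_mem _ fun i _ => V.smul_mem _ (hfV i)
  have hg2 : g = ∑ i, algebraMap K F (algebraMap Fq K (c i) - b i) * f i := by
    have key : ∀ i, algebraMap K F (algebraMap Fq K (c i) - b i) * f i
        = c i • f i - b i • f i := by
      intro i
      rw [map_sub, sub_mul, Algebra.smul_def, Algebra.smul_def,
        ← IsScalarTower.algebraMap_apply]
    rw [Finset.sum_congr rfl fun i _ => key i, Finset.sum_sub_distrib, hbsum, sub_zero, hg]
  -- g lies in L(D - Q')
  have hbound : ∀ P, (-(D P - if P = Q' then 1 else 0) : WithTop ℤ) ≤ v P g := by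
    intro P
    by_cases hP : P = Q'
    · subst hP
      have hcast : -((D P : WithTop ℤ) - if P = P then 1 else 0) = 1 := by
        rw [hQ'supp]; norm_num
      rw [hcast, hg2]
      apply (v P).map_le_sum
      intro i _
      rw [(v P).map_mul, hlie]
      have h1 : (1 : WithTop ℤ) ≤ e • vQ (algebraMap Fq K (c i) - b i) := by
        apply aux_one_le_nsmul _ e he
        apply aux_one_le_of_pos
        rw [vQ.map_sub_swap]
        exact hcpos i
      have h2 : (0 : WithTop ℤ) ≤ v P (f i) := by
        have := hVLD (f i) (hfV i) P
        simp only [hQ'supp, Int.cast_zero, WithTop.coe_zero, neg_zero] at this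
        exact this
      calc (1 : WithTop ℤ) = 1 + 0 := (add_zero 1).symm
        _ ≤ _ := add_le_add h1 h2
    · simp only [if_neg hP, sub_zero]
      rw [hg]
      apply (v P).map_le_sum
      intro i _
      by_cases hci : c i = 0
      · rw [hci, zero_smul, (v P).map_zero]; exact le_top
      · rw [Algebra.smul_def, (v P).map_mul, hconst P _ hci, zero_add]
        exact hVLD (f i) (hfV i) P
  -- conclude g = 0, hence all c i = 0
  have hg0 : g = 0 := hVcap g hgV hbound
  have hcall : ∀ i, c i = 0 := Fintype.linearIndependent_iff.mp hli c (by rw [← hg, hg0])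
  have hfin := hcpos i0
  rw [hcall i0, map_zero, sub_zero, hb0] at hfin
  exact lt_irrefl _ hfin
end

section
/- Let F/K be a finite extension of function fields over F_q of degree n, and suppose there is a rational place Q of K with a unique place Q' of F above it. Let D be a positive divisor of F with Q' not in its support and deg(D) < n. Then f_1, ..., f_s ∈ L(D) are linearly independent over F_q if and only if they are linearly independent over K. -/
/-! If `f` is `F_q`-independent but `K`-dependent, normalize a `K`-relation `∑ xᵢ fᵢ = 0` so
that every `xᵢ` is integral at `Q` and `x_j = 1`, and replace each `xᵢ` by its residue `cᵢ ∈ F_q`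
at the rational place `Q`. Then `g = ∑ cᵢ fᵢ` is a nonzero element of `L(D)` (as `c_j = 1`) that is
congruent to `∑ xᵢ fᵢ = 0` modulo `Q`, so `v_{Q'}(g) ≥ e`. Hence `(g) + D ≥ e·Q'`, and since
`deg (g) = 0` this gives `n = e·deg Q' ≤ deg D`. -/

theorem WithTop.one_le_iff_pos {a : WithTop ℤ} : 1 ≤ a ↔ 0 < a := by
  induction a with
  | top => simp
  | coe a => norm_cast

theorem AddValuation.exists_sum_smul_eq_zero_of_not_linearIndependent {K M ι Γ : Type*} [Field K]
    [AddCommGroup M] [Module K M] [Fintype ι] [LinearOrderedAddCommMonoidWithTop Γ]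
    [Nontrivial Γ] (v : AddValuation K Γ) {f : ι → M} (hf : ¬LinearIndependent K f) :
    ∃ x : ι → K, ∑ i, x i • f i = 0 ∧ (∃ j, x j = 1) ∧ ∀ i, 0 ≤ v (x i) := by
  obtain ⟨x, hx, j₀, hj₀⟩ := Fintype.not_linearIndependent_iff.mp hf
  obtain ⟨j, -, hj⟩ := Finset.univ.exists_min_image (fun i => v (x i)) ⟨j₀, Finset.mem_univ _⟩
  have hxj : x j ≠ 0 := fun h =>
    hj₀ <| v.top_iff.mp <| top_le_iff.mp <| by simpa [h] using hj j₀ (Finset.mem_univ _)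
  refine ⟨fun i => (x j)⁻¹ * x i, ?_, ⟨j, inv_mul_cancel₀ hxj⟩, fun i => ?_⟩
  · simp only [mul_smul, ← Finset.smul_sum, hx, smul_zero]
  · calc 0 = v (x j)⁻¹ + v (x j) := by rw [← v.map_mul, inv_mul_cancel₀ hxj, v.map_one]
      _ ≤ v (x j)⁻¹ + v (x i) := add_le_add_right (hj i (Finset.mem_univ _)) _
      _ = v ((x j)⁻¹ * x i) := (v.map_mul _ _).symm

theorem AddValuation.le_map_sum_smul {R F ι Γ : Type*} [CommSemiring R] [Field F] [Algebra R F]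
    [LinearOrderedAddCommMonoidWithTop Γ] (w : AddValuation F Γ)
    (hR : ∀ c : R, c ≠ 0 → w (algebraMap R F c) = 0) {s : Finset ι} {f : ι → F} {b : Γ}
    (hf : ∀ i, b ≤ w (f i)) (c : ι → R) : b ≤ w (∑ i ∈ s, c i • f i) := by
  refine w.map_le_sum fun i _ => ?_
  rcases eq_or_ne (c i) 0 with h | h
  · simp [h]
  · rw [Algebra.smul_def, w.map_mul, hR _ h, zero_add]
    exact hf i

theorem AddValuation.natCast_le_map_sum_algebraMap_mul {K F ι : Type*} [Field K] [Field F]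
    [Algebra K F] (w : AddValuation F (WithTop ℤ)) {vK : AddValuation K (WithTop ℤ)} {e : ℕ}
    (hlie : ∀ x, w (algebraMap K F x) = e • vK x) {s : Finset ι} {y : ι → K} {f : ι → F}
    (hy : ∀ i, 0 < vK (y i)) (hf : ∀ i, 0 ≤ w (f i)) :
    ((e : ℤ) : WithTop ℤ) ≤ w (∑ i ∈ s, algebraMap K F (y i) * f i) := by
  refine w.map_le_sum fun i _ => ?_
  rw [w.map_mul, hlie]
  calc ((e : ℤ) : WithTop ℤ) = e • (1 : WithTop ℤ) + 0 := by simp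
    _ ≤ e • vK (y i) + w (f i) :=
      add_le_add (nsmul_le_nsmul_right (WithTop.one_le_iff_pos.mpr (hy i)) e) (hf i)

theorem mul_le_finsupp_sum_of_finsum_eq_zero {ι : Type*} {w : ι → ℤ} {deg : ι → ℕ}
    {D : ι →₀ ℤ} {i₀ : ι} {m : ℤ} (hw : w.HasFiniteSupport)
    (hsum : ∑ᶠ i, w i * deg i = 0) (hwD : ∀ i, -D i ≤ w i) (hm : m ≤ w i₀) (hDi₀ : D i₀ = 0) :
    m * deg i₀ ≤ D.sum fun i k => k * deg i := by
  have hw' : (fun i => w i * (deg i : ℤ)).HasFiniteSupport := hw.mul_left _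
  have hD' : (fun i => D i * (deg i : ℤ)).HasFiniteSupport := D.hasFiniteSupport.mul_left _
  have hDsum : ∑ᶠ i, D i * (deg i : ℤ) = D.sum fun i k => k * deg i :=
    finsum_eq_sum_of_support_subset _ fun i hi => by simp_all
  calc m * deg i₀ ≤ (w i₀ + D i₀) * deg i₀ := by rw [hDi₀, add_zero]; gcongr
    _ ≤ ∑ᶠ i, (w i + D i) * deg i :=
      single_le_finsum i₀ (by simp only [add_mul]; exact hw'.add hD')
        fun i => mul_nonneg (by linarith [hwD i]) (Int.natCast_nonneg _)
    _ = D.sum fun i k => k * deg i := by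
      simp only [add_mul]
      rw [finsum_add_distrib hw' hD', hsum, zero_add, hDsum]

theorem mul_deg_le_deg_of_le_valuation {F PlaceF : Type*} [Field F]
    {v : PlaceF → AddValuation F (WithTop ℤ)} {degF : PlaceF → ℕ} {D : PlaceF →₀ ℤ}
    {Q' : PlaceF} {g : F} {m : ℤ} (hg : g ≠ 0) (hfin : {P | v P g ≠ 0}.Finite)
    (hdeg0 : ∑ᶠ P, (WithTop.untopD 0 (v P g)) * (degF P : ℤ) = 0)
    (hgD : ∀ P, (-(D P) : WithTop ℤ) ≤ v P g) (hm : (m : WithTop ℤ) ≤ v Q' g)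
    (hQ'supp : D Q' = 0) :
    m * degF Q' ≤ D.sum fun P k => k * (degF P : ℤ) := by
  have hne : ∀ P, v P g ≠ ⊤ := fun P => (v P).ne_top_iff.mpr hg
  refine mul_le_finsupp_sum_of_finsum_eq_zero (hfin.subset fun P hP h => hP (by simp [h])) hdeg0
    (fun P => (WithTop.le_untopD_iff (absurd · (hne P))).mpr (hgD P))
    ((WithTop.le_untopD_iff (absurd · (hne Q'))).mpr hm) hQ'supp

theorem linearIndependent_iff_of_unique_place_above_general
    (Fq K F : Type*) [Field Fq] [Field K] [Field F]
    [Algebra Fq K] [Algebra Fq F] [Algebra K F] [IsScalarTower Fq K F]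
    -- the places of F, with degrees
    (PlaceF : Type*) (v : PlaceF → AddValuation F (WithTop ℤ))
    (degF : PlaceF → ℕ)
    (hconst : ∀ P, ∀ c : Fq, c ≠ 0 → v P (algebraMap Fq F c) = 0)
    (hfin : ∀ g : F, g ≠ 0 → {P | v P g ≠ 0}.Finite)
    (hdeg0 : ∀ g : F, g ≠ 0 → ∑ᶠ P, (WithTop.untopD 0 (v P g)) * (degF P : ℤ) = 0)
    -- the rational place Q of K
    (vQ : AddValuation K (WithTop ℤ))
    (hQrat : ∀ x : K, vQ x = 0 → ∃ c : Fq, 0 < vQ (x - algebraMap Fq K c))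
    -- `Q'` is the unique place of `F` above `Q`, with ramification index `e`
    (Q' : PlaceF) (e : ℕ)
    (hlie : ∀ x : K, v Q' (algebraMap K F x) = e • vQ x)
    (hfund : e * degF Q' = Module.finrank K F)
    -- the positive divisor `D` with `Q' ∉ supp D` and `deg D < n`
    (D : PlaceF →₀ ℤ) (hQ'supp : D Q' = 0)
    (hdegD : (D.sum fun P k => k * (degF P : ℤ)) < (Module.finrank K F : ℤ))
    (s : ℕ) (f : Fin s → F)
    (hfLD : ∀ i, ∀ P, (-(D P) : WithTop ℤ) ≤ v P (f i)) :
    LinearIndependent Fq f ↔ LinearIndependent K f := by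
  refine ⟨fun hFq => ?_, fun hK => hK.restrict_scalars' Fq⟩
  by_contra hK
  obtain ⟨x, hx, ⟨j, hxj⟩, hx0⟩ := vQ.exists_sum_smul_eq_zero_of_not_linearIndependent hK
  have hres : ∀ y : K, 0 ≤ vQ y → ∃ c : Fq, 0 < vQ (y - algebraMap Fq K c) := fun y hy =>
    hy.eq_or_lt.elim (fun h => hQrat y h.symm) fun h => ⟨0, by simpa using h⟩
  choose c hc using fun i => hres (x i) (hx0 i)
  have hcj : c j ≠ 0 := fun h => by simpa [h, hxj] using hc j
  set g : F := ∑ i, c i • f i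
  have hg0 : g ≠ 0 := fun h => hcj (Fintype.linearIndependent_iff.mp hFq c h j)
  have hgD : ∀ P, (-(D P) : WithTop ℤ) ≤ v P g := fun P =>
    (v P).le_map_sum_smul (hconst P) (hfLD · P) c
  have hg : g = -∑ i, algebraMap K F (x i - algebraMap Fq K (c i)) * f i := by
    rw [eq_neg_iff_add_eq_zero, ← hx, ← Finset.sum_add_distrib]
    refine Finset.sum_congr rfl fun i _ => ?_
    rw [← algebraMap_smul K (c i), Algebra.smul_def, Algebra.smul_def (x i), ← add_mul,
      ← map_add, add_sub_cancel]
  have hgQ' : ((e : ℤ) : WithTop ℤ) ≤ v Q' g := by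
    rw [hg, (v Q').map_neg]
    exact (v Q').natCast_le_map_sum_algebraMap_mul hlie hc
      fun i => by simpa [hQ'supp] using hfLD i Q'
  have hdeg := mul_deg_le_deg_of_le_valuation hg0 (hfin g hg0) (hdeg0 g hg0) hgD hgQ' hQ'supp
  have hn : (e : ℤ) * degF Q' = Module.finrank K F := by exact_mod_cast hfund
  linarith

/-- Lemma 3.2.  Let `F/K` be a degree-`n` extension of function
fields over `F_q`, with a rational place `Q` of `K` having a unique place `Q'` of `F`
above it (so `e(Q'|Q)·deg Q' = n`).  Let `D` be a positive divisor of `F` with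
`Q' ∉ supp D` and `deg D < n`.  Then `f_1, …, f_s ∈ L(D)` are linearly independent
over `F_q` iff they are linearly independent over `K`.
Places are modelled as additive valuations `F → ℤ ∪ {∞}`; the function-field structure
is encoded by: constants have valuation `0`, every nonzero function has finitely many
zeros and poles, and its divisor has degree `0`. -/
theorem linearIndependent_iff_of_unique_place_above
    (Fq K F : Type*) [Field Fq] [Fintype Fq] [Field K] [Field F]
    [Algebra Fq K] [Algebra Fq F] [Algebra K F] [IsScalarTower Fq K F]
    [FiniteDimensional K F]
    -- the places of F, with degrees
    (PlaceF : Type*) (v : PlaceF → AddValuation F (WithTop ℤ))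
    (degF : PlaceF → ℕ) (hdegF : ∀ P, 0 < degF P)
    (hconst : ∀ P, ∀ c : Fq, c ≠ 0 → v P (algebraMap Fq F c) = 0)
    (hfin : ∀ g : F, g ≠ 0 → {P | v P g ≠ 0}.Finite)
    (hdeg0 : ∀ g : F, g ≠ 0 → ∑ᶠ P, (WithTop.untopD 0 (v P g)) * (degF P : ℤ) = 0)
    -- the rational place Q of K
    (vQ : AddValuation K (WithTop ℤ))
    (hconstK : ∀ c : Fq, c ≠ 0 → vQ (algebraMap Fq K c) = 0)
    (hQrat : ∀ x : K, vQ x = 0 → ∃ c : Fq, 0 < vQ (x - algebraMap Fq K c))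
    -- `Q'` is the unique place of `F` above `Q`, with ramification index `e`
    (Q' : PlaceF) (e : ℕ) (he : 0 < e)
    (hlie : ∀ x : K, v Q' (algebraMap K F x) = e • vQ x)
    (huniq : ∀ P : PlaceF,
      (∀ x : K, 0 < vQ x → 0 < v P (algebraMap K F x)) → P = Q')
    (hfund : e * degF Q' = Module.finrank K F)
    -- the positive divisor `D` with `Q' ∉ supp D` and `deg D < n`
    (D : PlaceF →₀ ℤ) (hDpos : ∀ P, 0 ≤ D P) (hQ'supp : D Q' = 0)
    (hdegD : (D.sum fun P k => k * (degF P : ℤ)) < (Module.finrank K F : ℤ))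
    (s : ℕ) (f : Fin s → F)
    (hfLD : ∀ i, ∀ P, (-(D P) : WithTop ℤ) ≤ v P (f i)) :
    LinearIndependent Fq f ↔ LinearIndependent K f :=
  linearIndependent_iff_of_unique_place_above_general Fq K F PlaceF v degF hconst hfin hdeg0 vQ
    hQrat Q' e hlie hfund D hQ'supp hdegD s f hfLD
end

section
/- Let K = F_q(x) and let p(x) ∈ F_q[x] be monic irreducible of degree d. In the cyclotomic function field F = K(Λ_{p(x)}), the Galois group Gal(F/K) is isomorphic to the unit group (F_q[x]/(p(x)))^*, which is cyclic of order q^d - 1. -/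
/-- The Carlitz module action `ρ_{p(x)}` on a field `L` containing `F_q(x)`:
`ρ_x(z) = z^q + x·z`, `ρ_{x^i}(z) = ρ_x(ρ_{x^{i-1}}(z))`, and
`ρ_{p(x)}(z) = ∑ a_i ρ_{x^i}(z)` for `p(x) = ∑ a_i x^i`. -/
noncomputable def carlitzAct (Fq : Type*) [Field Fq] [Fintype Fq]
    {L : Type*} [Field L] [Algebra (RatFunc Fq) L]
    (p : Polynomial Fq) (z : L) : L :=
  ∑ i ∈ Finset.range (p.natDegree + 1),
    algebraMap (RatFunc Fq) L (RatFunc.C (p.coeff i)) *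
      ((fun w : L => w ^ (Fintype.card Fq) + algebraMap (RatFunc Fq) L RatFunc.X * w)^[i] z)

/-- The cyclotomic function field `K(Λ_{p(x)})`, `K = F_q(x)`: the subfield of an
algebraic closure of `K` generated over `K` by the `p(x)`-torsion of the Carlitz
module. -/
noncomputable def cyclotomicFunctionField (Fq : Type*) [Field Fq] [Fintype Fq]
    (p : Polynomial Fq) :
    IntermediateField (RatFunc Fq) (AlgebraicClosure (RatFunc Fq)) :=
  IntermediateField.adjoin (RatFunc Fq)
    {α : AlgebraicClosure (RatFunc Fq) | carlitzAct Fq p α = 0}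


/-!
`ρ` extends to a ring homomorphism from `F_q[x]` to the additive endomorphisms of any
`F_q(x)`-algebra, so `ρ_{ab} = ρ_a ∘ ρ_b`. Writing `ρ_p(z) = ∑ [p]_j z^{q^j}`, the identity
`ρ_p ∘ ρ_x = ρ_x ∘ ρ_p` gives `(x^{q^{j+1}} - x) [p]_{j+1} = [p]_j^q - [p]_j`; since `p` does not
divide `x^{q^m} - x` for `0 < m < d`, all `[p]_j` with `j < d` are divisible by `p`, while
`[p]_0 = p` and `[p]_d = 1`. Hence `ψ_p(z) = ρ_p(z)/z` is Eisenstein at `p`, so irreducible of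
degree `q^d - 1`.

For a root `λ` of `ψ_p`, the annihilator of `λ` is `(p)`, so `a ↦ ρ_a(λ)` embeds `F_q[x]/(p)`,
of size `q^d`, into the at most `q^d` roots of `ρ_p`: every torsion point is some `ρ_a(λ)` and
`F = K(λ)`. An automorphism `σ` sends `λ` to another nonzero torsion point `ρ_a(λ)`, and
`σ ↦ a mod p` is multiplicative because `σ` commutes with `ρ`. It is injective since `λ`
generates `F`, and surjective since every `ρ_a(λ)` with `a` prime to `p` is again a root of the
minimal polynomial `ψ_p` of `λ`. Units of the finite field `F_q[x]/(p)` form a cyclic group.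
-/

open Polynomial

namespace Carlitz

variable {Fq : Type*} [Field Fq]

section Module

variable (Fq) (L : Type*) [CommRing L] [Algebra (RatFunc Fq) L]

noncomputable def polyMap : Fq[X] →+* L :=
  (algebraMap (RatFunc Fq) L).comp (algebraMap Fq[X] (RatFunc Fq))

variable {Fq L} in
lemma polyMap_C (c : Fq) : polyMap Fq L (C c) = algebraMap (RatFunc Fq) L (RatFunc.C c) := by
  simp [polyMap]

variable {Fq L} in
@[simp]
lemma algHom_polyMap {L' : Type*} [CommRing L'] [Algebra (RatFunc Fq) L']
    (g : L →ₐ[RatFunc Fq] L') (a : Fq[X]) : g (polyMap Fq L a) = polyMap Fq L' a :=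
  g.commutes _

variable [Fintype Fq]

local notation "q" => Fintype.card Fq

noncomputable def frobeniusHom : L →+* L :=
  letI := (polyMap Fq L).comp C |>.toAlgebra
  FiniteField.frobeniusAlgHom Fq L

variable {Fq L} in
@[simp]
lemma frobeniusHom_apply (z : L) : frobeniusHom Fq L z = z ^ q := rfl

noncomputable def carlitzX : AddMonoid.End L where
  toFun z := z ^ q + polyMap Fq L X * z
  map_zero' := by simp [zero_pow Fintype.card_ne_zero]
  map_add' y z := by
    rw [← frobeniusHom_apply, ← frobeniusHom_apply, ← frobeniusHom_apply, map_add]; ring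

variable {Fq L} in
lemma carlitzX_apply (z : L) : carlitzX Fq L z = z ^ q + polyMap Fq L X * z := rfl

lemma commute_carlitzX (c : Fq) :
    Commute (Module.toAddMonoidEnd L L (polyMap Fq L (C c))) (carlitzX Fq L) :=
  AddMonoidHom.ext fun z => by
    change polyMap Fq L (C c) * carlitzX Fq L z = carlitzX Fq L (polyMap Fq L (C c) * z)
    rw [carlitzX_apply, carlitzX_apply, mul_pow, ← map_pow, ← C_pow, FiniteField.pow_card]
    ring

noncomputable def carlitz : Fq[X] →+* AddMonoid.End L :=
  eval₂RingHom' ((Module.toAddMonoidEnd L L).comp ((polyMap Fq L).comp C)) (carlitzX Fq L)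
    (commute_carlitzX Fq L)

variable {Fq L}

@[simp]
lemma carlitz_X : carlitz Fq L X = carlitzX Fq L := eval₂_X _ _

@[simp]
lemma carlitz_C (c : Fq) (z : L) : carlitz Fq L (C c) z = polyMap Fq L (C c) * z := by
  rw [carlitz, eval₂RingHom'_apply, eval₂_C]; rfl

lemma carlitz_add_apply (a b : Fq[X]) (z : L) :
    carlitz Fq L (a + b) z = carlitz Fq L a z + carlitz Fq L b z := by
  rw [map_add]; rfl

lemma carlitz_sub_apply (a b : Fq[X]) (z : L) :
    carlitz Fq L (a - b) z = carlitz Fq L a z - carlitz Fq L b z := by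
  rw [map_sub]; rfl

lemma carlitz_sum_apply {ι : Type*} (s : Finset ι) (a : ι → Fq[X]) (z : L) :
    carlitz Fq L (∑ i ∈ s, a i) z = ∑ i ∈ s, carlitz Fq L (a i) z := by
  rw [map_sum]; exact AddMonoidHom.finsetSum_apply _ _ _

lemma carlitz_mul_apply (a b : Fq[X]) (z : L) :
    carlitz Fq L (a * b) z = carlitz Fq L a (carlitz Fq L b z) := by
  rw [map_mul]; rfl

lemma carlitz_X_pow_apply (i : ℕ) (z : L) : carlitz Fq L (X ^ i) z = (carlitzX Fq L)^[i] z := by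
  rw [map_pow, carlitz_X, AddMonoid.End.coe_pow]

lemma carlitzAct_eq {L : Type*} [Field L] [Algebra (RatFunc Fq) L] (a : Fq[X]) (z : L) :
    carlitzAct Fq a z = carlitz Fq L a z := by
  rw [carlitzAct, carlitz, eval₂RingHom'_apply, eval₂_eq_sum_range]
  refine .trans (Finset.sum_congr rfl fun i _ => ?_) (AddMonoidHom.finsetSum_apply _ _ _).symm
  change _ = polyMap Fq L (C (a.coeff i)) * (carlitzX Fq L ^ i) z
  rw [AddMonoid.End.coe_pow, polyMap_C]
  congr 3

lemma carlitz_algHom {L' : Type*} [CommRing L'] [Algebra (RatFunc Fq) L']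
    (g : L →ₐ[RatFunc Fq] L') (a : Fq[X]) (z : L) :
    g (carlitz Fq L a z) = carlitz Fq L' a (g z) := by
  induction a using Polynomial.induction_on generalizing z with
  | C c => simp
  | add a b ha hb => rw [carlitz_add_apply, map_add, ha, hb, carlitz_add_apply]
  | monomial n c ih =>
    rw [pow_succ, ← mul_assoc, carlitz_mul_apply _ X, carlitz_mul_apply _ X, ih, carlitz_X]
    simp [carlitzX_apply]

end Module

variable [Fintype Fq]

local notation "q" => Fintype.card Fq

section Coefficients

variable (Fq) in
/-- The coefficient of `z ^ q ^ j` in `ρ_{x^i}(z)`. -/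
noncomputable def xPowCoeff : ℕ → ℕ → Fq[X]
  | 0, 0 => 1
  | 0, _ + 1 => 0
  | i + 1, 0 => X * xPowCoeff i 0
  | i + 1, j + 1 => xPowCoeff i j ^ q + X * xPowCoeff i (j + 1)

lemma xPowCoeff_of_lt {i j : ℕ} (h : i < j) : xPowCoeff Fq i j = 0 := by
  induction i generalizing j with
  | zero => obtain ⟨j, rfl⟩ := Nat.exists_eq_add_one_of_ne_zero h.ne'; rfl
  | succ i ih =>
    obtain ⟨j, rfl⟩ := Nat.exists_eq_add_one_of_ne_zero (Nat.ne_zero_of_lt h)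
    rw [xPowCoeff, ih (by omega), ih (by omega), zero_pow Fintype.card_ne_zero, mul_zero, add_zero]

lemma xPowCoeff_self (i : ℕ) : xPowCoeff Fq i i = 1 := by
  induction i with
  | zero => rfl
  | succ i ih => rw [xPowCoeff, ih, xPowCoeff_of_lt i.lt_succ_self, one_pow, mul_zero, add_zero]

lemma xPowCoeff_zero_right (i : ℕ) : xPowCoeff Fq i 0 = X ^ i := by
  induction i with
  | zero => rfl
  | succ i ih => rw [xPowCoeff, ih, pow_succ']

/-- `ρ_x ∘ ρ_{x^i} = ρ_{x^i} ∘ ρ_x` on coefficients. -/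
lemma xPowCoeff_pow_card_add (i j : ℕ) :
    xPowCoeff Fq i j ^ q + X * xPowCoeff Fq i (j + 1) =
      xPowCoeff Fq i j + X ^ q ^ (j + 1) * xPowCoeff Fq i (j + 1) := by
  induction i generalizing j with
  | zero => cases j <;> simp [xPowCoeff, zero_pow Fintype.card_ne_zero]
  | succ i ih =>
    cases j with
    | zero =>
      simp only [xPowCoeff, zero_add, pow_one, mul_pow] at ih ⊢
      linear_combination (X : Fq[X]) * ih 0
    | succ j =>
      have ih_pow := congrArg (FiniteField.frobeniusAlgHom Fq Fq[X]) (ih j)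
      simp only [map_add, map_mul, FiniteField.frobeniusAlgHom_apply, ← pow_mul,
        ← pow_succ] at ih_pow
      simp only [xPowCoeff]
      rw [← FiniteField.frobeniusAlgHom_apply Fq, map_add, map_mul]
      simp only [FiniteField.frobeniusAlgHom_apply]
      linear_combination ih_pow + (X : Fq[X]) * ih (j + 1)

lemma carlitzX_iterate_eq_sum {L : Type*} [CommRing L] [Algebra (RatFunc Fq) L] {i N : ℕ}
    (h : i < N) (z : L) :
    (carlitzX Fq L)^[i] z = ∑ j ∈ Finset.range N, polyMap Fq L (xPowCoeff Fq i j) * z ^ q ^ j := by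
  induction i generalizing N with
  | zero =>
    rw [Finset.sum_eq_single_of_mem 0 (Finset.mem_range.2 h) fun j _ hj => ?_]
    · simp [xPowCoeff]
    · rw [xPowCoeff_of_lt (Nat.pos_of_ne_zero hj), map_zero, zero_mul]
  | succ i ih =>
    obtain ⟨M, rfl⟩ := Nat.exists_eq_add_one_of_ne_zero (Nat.ne_zero_of_lt h)
    rw [Function.iterate_succ_apply', carlitzX_apply]
    nth_rewrite 1 [ih (N := M) (by omega)]
    rw [ih (N := M + 1) (by omega), ← frobeniusHom_apply, map_sum, Finset.mul_sum,
      Finset.sum_range_succ' _ M, Finset.sum_range_succ' _ M]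
    simp only [frobeniusHom_apply]
    simp only [xPowCoeff, map_add, map_mul, map_pow, mul_pow, ← pow_mul, ← pow_succ, add_mul,
      ← mul_assoc, Finset.sum_add_distrib]
    ring

variable (Fq) in
/-- The coefficient of `z ^ q ^ j` in `ρ_a(z)`. -/
noncomputable def carlitzCoeff (a : Fq[X]) (j : ℕ) : Fq[X] :=
  a.sum fun i c => C c * xPowCoeff Fq i j

lemma carlitzCoeff_eq_sum {a : Fq[X]} {N : ℕ} (h : a.natDegree < N) (j : ℕ) :
    carlitzCoeff Fq a j = ∑ i ∈ Finset.range N, C (a.coeff i) * xPowCoeff Fq i j :=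
  a.sum_over_range' (fun _ => by rw [C_0, zero_mul]) N h

lemma carlitz_eq_sum {L : Type*} [CommRing L] [Algebra (RatFunc Fq) L] {a : Fq[X]} {N : ℕ}
    (h : a.natDegree < N) (z : L) :
    carlitz Fq L a z = ∑ j ∈ Finset.range N, polyMap Fq L (carlitzCoeff Fq a j) * z ^ q ^ j := by
  conv_lhs => rw [a.as_sum_range_C_mul_X_pow' h, carlitz_sum_apply]
  simp only [carlitzCoeff_eq_sum h, map_sum, Finset.sum_mul]
  rw [Finset.sum_comm]
  refine Finset.sum_congr rfl fun i hi => ?_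
  rw [carlitz_mul_apply, carlitz_C, carlitz_X_pow_apply,
    carlitzX_iterate_eq_sum (Finset.mem_range.1 hi), Finset.mul_sum]
  simp only [map_mul, mul_assoc]

lemma carlitzCoeff_zero (a : Fq[X]) : carlitzCoeff Fq a 0 = a := by
  simp only [carlitzCoeff, xPowCoeff_zero_right, C_mul_X_pow_eq_monomial]
  exact a.sum_monomial_eq

lemma carlitzCoeff_natDegree {a : Fq[X]} (ha : a.Monic) : carlitzCoeff Fq a a.natDegree = 1 := by
  rw [carlitzCoeff_eq_sum a.natDegree.lt_succ_self, Finset.sum_range_succ, xPowCoeff_self,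
    ha.coeff_natDegree, Finset.sum_eq_zero fun i hi => ?_]
  · simp
  · rw [xPowCoeff_of_lt (Finset.mem_range.1 hi), mul_zero]

lemma carlitzCoeff_pow_card_add (a : Fq[X]) (j : ℕ) :
    carlitzCoeff Fq a j ^ q + X * carlitzCoeff Fq a (j + 1) =
      carlitzCoeff Fq a j + X ^ q ^ (j + 1) * carlitzCoeff Fq a (j + 1) := by
  rw [carlitzCoeff, carlitzCoeff, ← FiniteField.frobeniusAlgHom_apply Fq, Polynomial.sum,
    Polynomial.sum, map_sum, Finset.mul_sum, Finset.mul_sum, ← Finset.sum_add_distrib,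
    ← Finset.sum_add_distrib]
  refine Finset.sum_congr rfl fun i _ => ?_
  rw [map_mul, FiniteField.frobeniusAlgHom_apply, FiniteField.frobeniusAlgHom_apply, ← C_pow,
    FiniteField.pow_card]
  linear_combination C (a.coeff i) * xPowCoeff_pow_card_add (Fq := Fq) i j

lemma dvd_carlitzCoeff {p : Fq[X]} (hp : Irreducible p) {j : ℕ} (hj : j < p.natDegree) :
    p ∣ carlitzCoeff Fq p j := by
  induction j with
  | zero => rw [carlitzCoeff_zero]
  | succ j ih =>
    have hdvd : p ∣ (X ^ q ^ (j + 1) - X) * carlitzCoeff Fq p (j + 1) := by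
      have hj' := ih (by omega)
      rw [show (X ^ q ^ (j + 1) - X) * carlitzCoeff Fq p (j + 1) =
          carlitzCoeff Fq p j ^ q - carlitzCoeff Fq p j by
        linear_combination -carlitzCoeff_pow_card_add p j]
      exact dvd_sub (hj'.trans (dvd_pow_self _ Fintype.card_ne_zero)) hj'
    refine (hp.prime.dvd_mul.1 hdvd).resolve_left fun h => ?_
    rw [← Nat.card_eq_fintype_card] at h
    exact Nat.not_dvd_of_pos_of_lt j.succ_pos hj (hp.natDegree_dvd_of_dvd_X_pow_card_pow_sub_X h)

end Coefficients

section Psi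

variable (Fq) in
/-- `ψ_p(Z) = ρ_p(Z) / Z`. -/
noncomputable def psi (p : Fq[X]) : Fq[X][X] :=
  ∑ j ∈ Finset.range (p.natDegree + 1), C (carlitzCoeff Fq p j) * X ^ (q ^ j - 1)

variable (Fq) in
noncomputable def psiK (p : Fq[X]) : (RatFunc Fq)[X] :=
  (psi Fq p).map (algebraMap Fq[X] (RatFunc Fq))

lemma pow_card_pow_sub_one_lt {i j : ℕ} (h : i < j) : q ^ i - 1 < q ^ j - 1 := by
  have := Nat.pow_lt_pow_right (Fintype.one_lt_card (α := Fq)) h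
  have := Nat.pow_pos (n := i) (Fintype.card_pos (α := Fq))
  omega

variable {p : Fq[X]}

lemma psi_eq_X_pow_add (hp : p.Monic) :
    psi Fq p = X ^ (q ^ p.natDegree - 1) +
      ∑ j ∈ Finset.range p.natDegree, C (carlitzCoeff Fq p j) * X ^ (q ^ j - 1) := by
  rw [psi, Finset.sum_range_succ, carlitzCoeff_natDegree hp, C_1, one_mul, add_comm]

lemma degree_psi_sub_X_pow_lt :
    (∑ j ∈ Finset.range p.natDegree, C (carlitzCoeff Fq p j) * X ^ (q ^ j - 1)).degree <
      ↑(q ^ p.natDegree - 1) :=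
  mem_degreeLT.1 <| Submodule.sum_mem _ fun _ hj => mem_degreeLT.2 <|
    (degree_C_mul_X_pow_le _ _).trans_lt <|
      WithBot.coe_lt_coe.2 (pow_card_pow_sub_one_lt (Finset.mem_range.1 hj))

lemma monic_psi (hp : p.Monic) : (psi Fq p).Monic := by
  rw [psi_eq_X_pow_add hp]
  exact monic_X_pow_add degree_psi_sub_X_pow_lt

lemma natDegree_psi (hp : p.Monic) : (psi Fq p).natDegree = q ^ p.natDegree - 1 := by
  rw [psi_eq_X_pow_add hp, natDegree_add_eq_left_of_degree_lt, natDegree_X_pow]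
  rw [degree_X_pow]
  exact degree_psi_sub_X_pow_lt

lemma coeff_psi_zero : (psi Fq p).coeff 0 = p := by
  rw [psi, finsetSum_coeff, Finset.sum_eq_single_of_mem 0 (by simp) fun j _ hj => ?_]
  · simp [carlitzCoeff_zero]
  · rw [coeff_C_mul_X_pow, if_neg]
    exact (pow_card_pow_sub_one_lt (Nat.pos_of_ne_zero hj)).ne

lemma isEisensteinAt_psi (hp : p.Monic) (hirr : Irreducible p) :
    (psi Fq p).IsEisensteinAt (Ideal.span {p}) := by
  refine (monic_psi hp).isEisensteinAt_of_mem_of_notMem ?_ (fun {n} hn => ?_) ?_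
  · exact Ideal.span_singleton_ne_top hirr.not_isUnit
  · have htail : ∑ j ∈ Finset.range p.natDegree, C (carlitzCoeff Fq p j) * X ^ (q ^ j - 1) ∈
        (Ideal.span {p}).map C :=
      Ideal.sum_mem _ fun j hj => Ideal.mul_mem_right _ _ <| Ideal.mem_map_of_mem C <|
        Ideal.mem_span_singleton.2 (dvd_carlitzCoeff hirr (Finset.mem_range.1 hj))
    rw [natDegree_psi hp] at hn
    rw [psi_eq_X_pow_add hp, coeff_add, coeff_X_pow, if_neg hn.ne, zero_add]
    exact Ideal.mem_map_C_iff.1 htail n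
  · rw [coeff_psi_zero, Ideal.span_singleton_pow, Ideal.mem_span_singleton, pow_two]
    intro h
    exact hirr.not_isUnit
      (isUnit_of_dvd_one ((mul_dvd_mul_iff_left hirr.ne_zero).1 (by simpa using h)))

lemma irreducible_psi (hp : p.Monic) (hirr : Irreducible p) : Irreducible (psi Fq p) := by
  refine (isEisensteinAt_psi hp hirr).irreducible
    ((Ideal.span_singleton_prime hirr.ne_zero).2 hirr.prime) (monic_psi hp).isPrimitive ?_
  rw [natDegree_psi hp, Nat.sub_pos_iff_lt]
  exact Nat.one_lt_pow hirr.natDegree_pos.ne' Fintype.one_lt_card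

lemma monic_psiK (hp : p.Monic) : (psiK Fq p).Monic := (monic_psi hp).map _

lemma natDegree_psiK (hp : p.Monic) : (psiK Fq p).natDegree = q ^ p.natDegree - 1 := by
  rw [psiK, (monic_psi hp).natDegree_map, natDegree_psi hp]

lemma irreducible_psiK (hp : p.Monic) (hirr : Irreducible p) : Irreducible (psiK Fq p) :=
  (monic_psi hp).irreducible_iff_irreducible_map_fraction_map.1 (irreducible_psi hp hirr)

lemma carlitz_eq_mul_aeval_psiK {L : Type*} [CommRing L] [Algebra (RatFunc Fq) L] (z : L) :
    carlitz Fq L p z = z * aeval z (psiK Fq p) := by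
  rw [carlitz_eq_sum p.natDegree.lt_succ_self, psiK, aeval_def, eval₂_map, psi, eval₂_finsetSum,
    Finset.mul_sum]
  refine Finset.sum_congr rfl fun j _ => ?_
  rw [eval₂_mul, eval₂_C, eval₂_X_pow, mul_left_comm, ← pow_succ',
    Nat.sub_add_cancel (Nat.pow_pos Fintype.card_pos)]
  rfl

lemma natDegree_X_mul_psiK (hp : p.Monic) : (X * psiK Fq p).natDegree = q ^ p.natDegree := by
  rw [natDegree_mul X_ne_zero (monic_psiK hp).ne_zero, natDegree_X, natDegree_psiK hp]
  have := Nat.pow_pos (n := p.natDegree) (Fintype.card_pos (α := Fq))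
  omega

end Psi

section Torsion

variable {L : Type*} [Field L] [Algebra (RatFunc Fq) L] {p : Fq[X]} {ζ : L}

lemma aeval_psiK_eq_zero_iff (hp : p ≠ 0) {z : L} :
    aeval z (psiK Fq p) = 0 ↔ z ≠ 0 ∧ carlitz Fq L p z = 0 := by
  rw [carlitz_eq_mul_aeval_psiK, mul_eq_zero]
  refine ⟨fun h => ⟨?_, .inr h⟩, fun ⟨hz, h⟩ => h.resolve_left hz⟩
  rintro rfl
  rw [aeval_def, eval₂_at_zero, psiK, coeff_map, coeff_psi_zero] at h
  simp [hp] at h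

lemma torsion_eq_rootSet (hp : p.Monic) :
    {z : L | carlitz Fq L p z = 0} = (X * psiK Fq p).rootSet L := by
  ext z
  rw [mem_rootSet, map_mul, aeval_X, ← carlitz_eq_mul_aeval_psiK]
  exact (and_iff_right (monic_X.mul (monic_psiK hp)).ne_zero).symm

lemma carlitz_apply_eq_zero_of_dvd (hζ : carlitz Fq L p ζ = 0) {a : Fq[X]} (h : p ∣ a) :
    carlitz Fq L a ζ = 0 := by
  obtain ⟨b, rfl⟩ := h
  rw [mul_comm, carlitz_mul_apply, hζ, map_zero]

lemma dvd_of_carlitz_apply_eq_zero (hirr : Irreducible p) (hζ : carlitz Fq L p ζ = 0)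
    (hζ0 : ζ ≠ 0) {a : Fq[X]} (ha : carlitz Fq L a ζ = 0) : p ∣ a := by
  by_contra hpa
  obtain ⟨u, v, huv⟩ := hirr.coprime_iff_not_dvd.2 hpa
  apply hζ0
  have := congrArg (carlitz Fq L · ζ) huv
  simp only [carlitz_add_apply, carlitz_mul_apply, hζ, ha, map_zero, add_zero, map_one] at this
  exact this.symm

lemma carlitz_apply_eq_iff (hirr : Irreducible p) (hζ : carlitz Fq L p ζ = 0) (hζ0 : ζ ≠ 0)
    (a b : Fq[X]) :
    carlitz Fq L a ζ = carlitz Fq L b ζ ↔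
      Ideal.Quotient.mk (Ideal.span {p}) a = Ideal.Quotient.mk (Ideal.span {p}) b := by
  rw [Ideal.Quotient.eq, Ideal.mem_span_singleton, ← sub_eq_zero, ← carlitz_sub_apply]
  exact ⟨dvd_of_carlitz_apply_eq_zero hirr hζ hζ0, carlitz_apply_eq_zero_of_dvd hζ⟩

lemma natCard_quotient_span_singleton (hp : p ≠ 0) :
    Nat.card (Fq[X] ⧸ Ideal.span {p}) = q ^ p.natDegree := by
  have := (AdjoinRoot.powerBasis hp).finite
  rw [← Nat.card_eq_fintype_card, ← AdjoinRoot.powerBasis_dim hp, ← PowerBasis.finrank]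
  exact Module.natCard_eq_pow_finrank (K := Fq) (V := AdjoinRoot p)

/-- `a ↦ ρ_a(ζ)` is injective on `F_q[x]/(p)`, which has as many elements as `ρ_p` has at most
roots. -/
lemma exists_carlitz_apply_eq (hp : p.Monic) (hirr : Irreducible p) (hζ : carlitz Fq L p ζ = 0)
    (hζ0 : ζ ≠ 0) {z : L} (hz : carlitz Fq L p z = 0) : ∃ a, carlitz Fq L a ζ = z := by
  let rep := Function.surjInv (Ideal.Quotient.mk_surjective (I := Ideal.span {p}))
  have hrep := Function.surjInv_eq (Ideal.Quotient.mk_surjective (I := Ideal.span {p}))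
  let orbit t := carlitz Fq L (rep t) ζ
  have horbit : Function.Injective orbit := fun s t h => by
    rwa [carlitz_apply_eq_iff hirr hζ hζ0, hrep, hrep] at h
  have hsub : Set.range orbit ⊆ (X * psiK Fq p).rootSet L := by
    rintro _ ⟨t, rfl⟩
    rw [← torsion_eq_rootSet hp]
    change carlitz Fq L p (carlitz Fq L (rep t) ζ) = 0
    rw [← carlitz_mul_apply, mul_comm, carlitz_mul_apply, hζ, map_zero]
  have hcard : ((X * psiK Fq p).rootSet L).ncard ≤ (Set.range orbit).ncard := by
    rw [Set.ncard_range_of_injective horbit, natCard_quotient_span_singleton hirr.ne_zero,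
      ← natDegree_X_mul_psiK hp]
    exact ncard_rootSet_le _ _
  have hz' : z ∈ (X * psiK Fq p).rootSet L := torsion_eq_rootSet (L := L) hp ▸ hz
  obtain ⟨t, ht⟩ := Set.eq_of_subset_of_ncard_le hsub hcard (rootSet_finite _ _) ▸ hz'
  exact ⟨rep t, ht⟩

open IntermediateField in
lemma adjoin_torsion_eq_adjoin_simple (hp : p.Monic) (hirr : Irreducible p)
    (hζ : aeval ζ (psiK Fq p) = 0) :
    adjoin (RatFunc Fq) {z : L | carlitz Fq L p z = 0} = (RatFunc Fq)⟮ζ⟯ := by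
  obtain ⟨hζ0, hζp⟩ := (aeval_psiK_eq_zero_iff hirr.ne_zero).1 hζ
  refine le_antisymm (adjoin_le_iff.2 fun z hz => ?_)
    (adjoin_simple_le_iff.2 (subset_adjoin _ _ hζp))
  obtain ⟨a, rfl⟩ := exists_carlitz_apply_eq hp hirr hζp hζ0 hz
  have h := carlitz_algHom (RatFunc Fq)⟮ζ⟯.val a (AdjoinSimple.gen (RatFunc Fq) ζ)
  rw [coe_val, AdjoinSimple.coe_gen] at h
  exact h ▸ SetLike.coe_mem _

end Torsion

section Galois

variable {E : Type*} [Field E] [Algebra (RatFunc Fq) E] {p : Fq[X]}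
  {pb : PowerBasis (RatFunc Fq) E}

lemma gen_ne_zero_of_minpoly_eq (hirr : Irreducible p)
    (hpb : minpoly (RatFunc Fq) pb.gen = psiK Fq p) : pb.gen ≠ 0 :=
  ((aeval_psiK_eq_zero_iff hirr.ne_zero).1 (hpb ▸ minpoly.aeval _ _)).1

lemma carlitz_gen_eq_zero (hirr : Irreducible p) (hpb : minpoly (RatFunc Fq) pb.gen = psiK Fq p) :
    carlitz Fq E p pb.gen = 0 :=
  ((aeval_psiK_eq_zero_iff hirr.ne_zero).1 (hpb ▸ minpoly.aeval _ _)).2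

lemma exists_apply_gen_eq_carlitz (hp : p.Monic) (hirr : Irreducible p)
    (hpb : minpoly (RatFunc Fq) pb.gen = psiK Fq p) (σ : E ≃ₐ[RatFunc Fq] E) :
    ∃ a, σ pb.gen = carlitz Fq E a pb.gen := by
  refine (exists_carlitz_apply_eq hp hirr (carlitz_gen_eq_zero hirr hpb)
    (gen_ne_zero_of_minpoly_eq hirr hpb) ?_).imp fun _ h => h.symm
  rw [← AlgEquiv.coe_toAlgHom, ← carlitz_algHom, carlitz_gen_eq_zero hirr hpb, map_zero]

variable (hp : p.Monic) (hirr : Irreducible p) (hpb : minpoly (RatFunc Fq) pb.gen = psiK Fq p)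

noncomputable def galoisClass (σ : E ≃ₐ[RatFunc Fq] E) : Fq[X] ⧸ Ideal.span {p} :=
  Ideal.Quotient.mk _ (exists_apply_gen_eq_carlitz hp hirr hpb σ).choose

lemma galoisClass_eq_mk_iff (σ : E ≃ₐ[RatFunc Fq] E) (a : Fq[X]) :
    galoisClass hp hirr hpb σ = Ideal.Quotient.mk _ a ↔ σ pb.gen = carlitz Fq E a pb.gen := by
  rw [galoisClass, ← carlitz_apply_eq_iff hirr (carlitz_gen_eq_zero hirr hpb)
    (gen_ne_zero_of_minpoly_eq hirr hpb), ← (exists_apply_gen_eq_carlitz hp hirr hpb σ).choose_spec]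

lemma exists_galoisClass_eq_mk (σ : E ≃ₐ[RatFunc Fq] E) :
    ∃ a, galoisClass hp hirr hpb σ = Ideal.Quotient.mk _ a ∧ σ pb.gen = carlitz Fq E a pb.gen :=
  let ⟨a, ha⟩ := Ideal.Quotient.mk_surjective (galoisClass hp hirr hpb σ)
  ⟨a, ha.symm, (galoisClass_eq_mk_iff hp hirr hpb σ a).1 ha.symm⟩

lemma galoisClass_mul (σ τ : E ≃ₐ[RatFunc Fq] E) :
    galoisClass hp hirr hpb (σ * τ) = galoisClass hp hirr hpb σ * galoisClass hp hirr hpb τ := by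
  obtain ⟨a, ha, hσ⟩ := exists_galoisClass_eq_mk hp hirr hpb σ
  obtain ⟨b, hb, hτ⟩ := exists_galoisClass_eq_mk hp hirr hpb τ
  rw [ha, hb, ← map_mul, mul_comm, galoisClass_eq_mk_iff, AlgEquiv.mul_apply, hτ,
    ← AlgEquiv.coe_toAlgHom, carlitz_algHom, AlgEquiv.coe_toAlgHom, hσ, carlitz_mul_apply]

lemma isUnit_galoisClass (σ : E ≃ₐ[RatFunc Fq] E) : IsUnit (galoisClass hp hirr hpb σ) := by
  have := PrincipalIdealRing.isMaximal_of_irreducible hirr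
  let := Ideal.Quotient.field (Ideal.span {p})
  refine isUnit_iff_ne_zero.2 fun h => gen_ne_zero_of_minpoly_eq hirr hpb (σ.injective ?_)
  rw [← map_zero (Ideal.Quotient.mk _), galoisClass_eq_mk_iff] at h
  rw [h, map_zero, map_zero]
  rfl

noncomputable def galoisCharacter : (E ≃ₐ[RatFunc Fq] E) →* (Fq[X] ⧸ Ideal.span {p})ˣ :=
  MonoidHom.mk' (fun σ => (isUnit_galoisClass hp hirr hpb σ).unit)
    fun σ τ => Units.ext (galoisClass_mul hp hirr hpb σ τ)

lemma galoisCharacter_injective : Function.Injective (galoisCharacter hp hirr hpb) := by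
  intro σ τ h
  obtain ⟨a, ha, hσ⟩ := exists_galoisClass_eq_mk hp hirr hpb σ
  have hτ : τ pb.gen = carlitz Fq E a pb.gen := by
    rw [← galoisClass_eq_mk_iff hp hirr hpb, ← ha]
    exact congrArg Units.val h.symm
  exact AlgEquiv.coe_toAlgHom_injective (pb.algHom_ext (hσ.trans hτ.symm))

lemma galoisCharacter_surjective : Function.Surjective (galoisCharacter hp hirr hpb) := by
  intro u
  obtain ⟨a, ha⟩ := Ideal.Quotient.mk_surjective (u : Fq[X] ⧸ Ideal.span {p})
  have hne : carlitz Fq E a pb.gen ≠ 0 := fun h => by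
    have := PrincipalIdealRing.isMaximal_of_irreducible hirr
    refine u.ne_zero ?_
    rw [← ha, ← map_zero (Ideal.Quotient.mk _), ← carlitz_apply_eq_iff hirr
      (carlitz_gen_eq_zero hirr hpb) (gen_ne_zero_of_minpoly_eq hirr hpb), h, map_zero]
    rfl
  have hroot : aeval (carlitz Fq E a pb.gen) (minpoly (RatFunc Fq) pb.gen) = 0 := by
    rw [hpb, aeval_psiK_eq_zero_iff hirr.ne_zero, ← carlitz_mul_apply, mul_comm,
      carlitz_mul_apply, carlitz_gen_eq_zero hirr hpb, map_zero]
    exact ⟨hne, rfl⟩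
  have := pb.finite
  let σ := AlgEquiv.ofBijective (pb.lift _ hroot) (pb.lift _ hroot).bijective
  refine ⟨σ, Units.ext ?_⟩
  rw [galoisCharacter, MonoidHom.mk'_apply, IsUnit.unit_spec, ← ha, galoisClass_eq_mk_iff,
    AlgEquiv.ofBijective_apply, PowerBasis.lift_gen]

noncomputable def galoisEquivUnits : (E ≃ₐ[RatFunc Fq] E) ≃* (Fq[X] ⧸ Ideal.span {p})ˣ :=
  MulEquiv.ofBijective (galoisCharacter hp hirr hpb)
    ⟨galoisCharacter_injective hp hirr hpb, galoisCharacter_surjective hp hirr hpb⟩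

end Galois

end Carlitz

/-- For `K = F_q(x)` and `p(x) ∈ F_q[x]` monic irreducible of degree
`d`, the Galois group `Gal(K(Λ_{p(x)})/K)` is isomorphic to the unit group
`(F_q[x]/(p(x)))ˣ`; in particular it is cyclic of order `q^d - 1`. -/
theorem cyclotomicFunctionField_galoisGroup
    (Fq : Type*) [Field Fq] [Fintype Fq]
    (p : Polynomial Fq) (hmonic : p.Monic) (hirr : Irreducible p) :
    Nonempty ((↥(cyclotomicFunctionField Fq p) ≃ₐ[RatFunc Fq]
          ↥(cyclotomicFunctionField Fq p)) ≃*
        (Polynomial Fq ⧸ Ideal.span ({p} : Set (Polynomial Fq)))ˣ) ∧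
      IsCyclic (↥(cyclotomicFunctionField Fq p) ≃ₐ[RatFunc Fq]
          ↥(cyclotomicFunctionField Fq p)) ∧
      Nat.card (↥(cyclotomicFunctionField Fq p) ≃ₐ[RatFunc Fq]
          ↥(cyclotomicFunctionField Fq p)) = Fintype.card Fq ^ p.natDegree - 1 := by
  open Carlitz IntermediateField in
  have hdeg : (psiK Fq p).degree ≠ 0 :=
    (natDegree_pos_iff_degree_pos.1 (irreducible_psiK hmonic hirr).natDegree_pos).ne'
  obtain ⟨ζ, hζ⟩ := IsAlgClosed.exists_aeval_eq_zero (AlgebraicClosure (RatFunc Fq)) _ hdeg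
  have hmin : minpoly (RatFunc Fq) ζ = psiK Fq p :=
    (minpoly.eq_of_irreducible_of_monic (irreducible_psiK hmonic hirr) hζ (monic_psiK hmonic)).symm
  have hint : IsIntegral (RatFunc Fq) ζ := ⟨_, monic_psiK hmonic, hζ⟩
  have hF : cyclotomicFunctionField Fq p = (RatFunc Fq)⟮ζ⟯ := by
    simp only [cyclotomicFunctionField, carlitzAct_eq]
    exact adjoin_torsion_eq_adjoin_simple hmonic hirr hζ
  let e := galoisEquivUnits hmonic hirr (pb := adjoin.powerBasis hint)
    (by rw [adjoin.powerBasis_gen, minpoly_gen, hmin])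
  have := PrincipalIdealRing.isMaximal_of_irreducible hirr
  let := Ideal.Quotient.field (Ideal.span {p})
  have hcard := natCard_quotient_span_singleton hirr.ne_zero
  have : Finite (Fq[X] ⧸ Ideal.span {p}) :=
    Nat.finite_of_card_ne_zero (hcard ▸ pow_ne_zero _ Fintype.card_ne_zero)
  rw [hF]
  exact ⟨⟨e⟩, isCyclic_of_surjective e.symm e.symm.surjective,
    by rw [Nat.card_congr e.toEquiv, Nat.card_units, hcard]⟩
end

section
/- Let T_1, T_2 : F^n → F^{2n} with T_1(v) = (v, 0) and T_2(v) = (0, v), and let E_1, ..., E_M : F^{2n} → F^n be surjective linear maps whose kernels H_i = ker(E_i) satisfy: for every subspace W ⊆ F^{2n} of dimension 2ℓ (ℓ ≤ b), there exists i with dim(W ∩ H_i) ≤ 2ℓ/3. Then the collection of 2M linear maps {E_i ∘ T_j} : F^n → F^n is a (b, 1/3)-dimension expander: for every subspace V ⊆ F^n with dim(V) ≤ b, dim(Σ_{i,j} E_i(T_j(V))) ≥ (4/3)·dim(V). -/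
lemma aux_rank_nullity {F : Type*} [Field F] {A B : Type*} [AddCommGroup A] [Module F A]
    [AddCommGroup B] [Module F B] (f : A →ₗ[F] B) (W : Submodule F A)
    [FiniteDimensional F W] :
    Module.finrank F (W.map f) + Module.finrank F ↥(W ⊓ LinearMap.ker f)
      = Module.finrank F W := by
  have h1 := LinearMap.finrank_range_add_finrank_ker (f.domRestrict W)
  rw [LinearMap.range_domRestrict, LinearMap.ker_domRestrict] at h1
  have h2 : Submodule.comap W.subtype (LinearMap.ker f)
      = Submodule.comap W.subtype (W ⊓ LinearMap.ker f) := by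
    rw [Submodule.comap_inf, Submodule.comap_subtype_self, top_inf_eq]
  rw [h2, (Submodule.comapSubtypeEquivOfLe (inf_le_left :
      W ⊓ LinearMap.ker f ≤ W)).finrank_eq] at h1
  exact h1


set_option maxHeartbeats 1000000 in
/-- tensor-then-condense dimension expander.  Let
`T_1, T_2 : F^n → F^(2n)` be `T_1 v = (v, 0)`, `T_2 v = (0, v)`, and let
`E_1, …, E_M : F^(2n) → F^n` be surjective linear maps whose kernels
`H_i = ker E_i` satisfy: for every subspace `W ⊆ F^(2n)` of dimension `2ℓ` with
`ℓ ≤ b` there is an `i` with `dim(W ∩ H_i) ≤ 2ℓ/3`.  Then the `2M` maps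
`E_i ∘ T_j` form a `(b, 1/3)`-dimension expander: every subspace `V ⊆ F^n` with
`dim V ≤ b` satisfies `dim (∑_{i,j} E_i(T_j(V))) ≥ (4/3)·dim V`. -/
theorem tensor_then_condense_dimension_expander
    (F : Type*) [Field F] (n b M : ℕ)
    (E : Fin M → ((Fin n → F) × (Fin n → F)) →ₗ[F] (Fin n → F))
    (hsurj : ∀ i, Function.Surjective (E i))
    (hcond : ∀ ℓ : ℕ, ℓ ≤ b → ∀ W : Submodule F ((Fin n → F) × (Fin n → F)),
      Module.finrank F W = 2 * ℓ →
        ∃ i, 3 * Module.finrank F ↥(W ⊓ LinearMap.ker (E i)) ≤ 2 * ℓ)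
    (V : Submodule F (Fin n → F)) (hV : Module.finrank F V ≤ b) :
    4 * Module.finrank F V ≤
      3 * Module.finrank F
        ↥(⨆ i : Fin M, ⨆ j : Fin 2,
          Submodule.map
            ((E i).comp (if j = 0 then LinearMap.inl F (Fin n → F) (Fin n → F)
              else LinearMap.inr F (Fin n → F) (Fin n → F))) V) := by
  set ℓ := Module.finrank F V with hℓ
  set W : Submodule F ((Fin n → F) × (Fin n → F)) :=
    V.map (LinearMap.inl F _ _) ⊔ V.map (LinearMap.inr F _ _) with hWdef
  have hinl : Module.finrank F (V.map (LinearMap.inl F (Fin n → F) (Fin n → F))) = ℓ :=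
    ((Submodule.equivMapOfInjective _ LinearMap.inl_injective V).finrank_eq).symm
  have hinr : Module.finrank F (V.map (LinearMap.inr F (Fin n → F) (Fin n → F))) = ℓ :=
    ((Submodule.equivMapOfInjective _ LinearMap.inr_injective V).finrank_eq).symm
  have hdisj : V.map (LinearMap.inl F (Fin n → F) (Fin n → F)) ⊓
      V.map (LinearMap.inr F (Fin n → F) (Fin n → F)) = ⊥ := by
    apply le_bot_iff.mp
    refine le_trans (inf_le_inf (LinearMap.map_le_range) (LinearMap.map_le_range)) ?_
    exact (LinearMap.isCompl_range_inl_inr).disjoint.le_bot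
  have hWrank : Module.finrank F W = 2 * ℓ := by
    have := Submodule.finrank_sup_add_finrank_inf_eq
      (V.map (LinearMap.inl F (Fin n → F) (Fin n → F)))
      (V.map (LinearMap.inr F (Fin n → F) (Fin n → F)))
    rw [hinl, hinr, hdisj] at this
    rw [← hWdef] at this
    simp only [finrank_bot] at this
    omega
  obtain ⟨i, hi⟩ := hcond ℓ hV W hWrank
  have hrn := aux_rank_nullity (E i) W
  rw [hWrank] at hrn
  -- map (E i) W is contained in the big sup
  have hle : W.map (E i) ≤ ⨆ i : Fin M, ⨆ j : Fin 2,
      Submodule.map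
        ((E i).comp (if j = 0 then LinearMap.inl F (Fin n → F) (Fin n → F)
          else LinearMap.inr F (Fin n → F) (Fin n → F))) V := by
    rw [hWdef, Submodule.map_sup, ← Submodule.map_comp, ← Submodule.map_comp]
    apply sup_le
    · refine le_trans ?_ (le_iSup _ i)
      refine le_trans ?_ (le_iSup _ (0 : Fin 2))
      simp
    · refine le_trans ?_ (le_iSup _ i)
      refine le_trans ?_ (le_iSup _ (1 : Fin 2))
      simp
  have hmono := Submodule.finrank_mono hle
  omega
end
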